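/- arXiv:2106.05641 — 9 statements merged into one kernel-verified Lean document; each statement's English description precedes it below -/
import Mathlib

section
/- Let Ω ⊆ ℝ^N be a nonempty open set and let E ⊆ ℝ^N be a measurable set with P^γ_{s₀}(E;Ω) < ∞ for some s₀ ∈ (0,1). Then limsup_{s→0⁺} s·P^γ_s(E;Ω) ≤ 2(γ(E)γ(Ω\E) + γ(E∩Ω)γ(Eᶜ∩Ωᶜ)). -/
open MeasureTheory Real Set Filter

noncomputable def gaussDensity (N : ℕ) (x : EuclideanSpace ℝ (Fin N)) : ℝ :=
  (2 * π) ^ (-(N : ℝ) / 2) * Real.exp (-‖x‖ ^ 2 / 2)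

noncomputable def gaussMeasure (N : ℕ) : Measure (EuclideanSpace ℝ (Fin N)) :=
  volume.withDensity fun x => ENNReal.ofReal (gaussDensity N x)

noncomputable def mehler (N : ℕ) (t : ℝ) (x y : EuclideanSpace ℝ (Fin N)) : ℝ :=
  (1 - Real.exp (-2 * t)) ^ (-(N : ℝ) / 2) *
    Real.exp (-(Real.exp (-2 * t) * ‖x‖ ^ 2 - 2 * Real.exp (-t) * (inner ℝ x y : ℝ) +
      Real.exp (-2 * t) * ‖y‖ ^ 2) / (2 * (1 - Real.exp (-2 * t))))

noncomputable def Kker (N : ℕ) (σ : ℝ) (x y : EuclideanSpace ℝ (Fin N)) : ENNReal :=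
  ∫⁻ t in Ioi (0 : ℝ), ENNReal.ofReal (mehler N t x y * t ^ (-σ / 2 - 1))

noncomputable def Lgamma (N : ℕ) (s : ℝ) (A B : Set (EuclideanSpace ℝ (Fin N))) : ENNReal :=
  ∫⁻ x in A, ∫⁻ y in B, Kker N s x y ∂(gaussMeasure N) ∂(gaussMeasure N)

noncomputable def Pgamma (N : ℕ) (s : ℝ) (E Ω : Set (EuclideanSpace ℝ (Fin N))) : ENNReal :=
  Lgamma N s (E ∩ Ω) (Eᶜ ∩ Ω) + Lgamma N s (E ∩ Ω) (Eᶜ ∩ Ωᶜ) + Lgamma N s (E ∩ Ωᶜ) (Eᶜ ∩ Ω)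

/-!
Split the time integral defining `K_s` at `T ≥ 1`. On `(0, T]` the weight `t^(-s/2-1)` is at most
`T^(s₀/2) t^(-s₀/2-1)`, so this part is bounded by `T^(s₀/2) K_{s₀}`, whose perimeter is finite and
is killed by the factor `s`. On `(T, ∞)` the Mehler kernel is at most
`c_T exp(ε_T (|x|² + |y|²) / 2)` with `c_T → 1` and `ε_T → 0`, while `∫_T^∞ t^(-s/2-1) dt ≤ 2/s`;
so `s` times this part of `L_s(A, B)` is at most `2 c_T ∫_A e^{ε_T|x|²/2} dγ ∫_B e^{ε_T|y|²/2} dγ`.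
Letting `s → 0⁺` and then `T → ∞` (dominated convergence) bounds the contribution of each pair
`(A, B)` by `2 γ(A) γ(B)`, and `γ(E ∩ Ω) + γ(E \ Ω) = γ(E)` collects the three pairs.
-/

open scoped Topology ENNReal

-- `e^{-t} / (1 - e^{-2t}) ≤ mehlerTailRate T` for `t ≥ T ≥ 1`.
noncomputable def mehlerTailRate (T : ℝ) : ℝ := Real.exp (-T) / (1 - Real.exp (-2))

noncomputable def mehlerTailConst (N : ℕ) (T : ℝ) : ℝ := (1 - Real.exp (-2 * T)) ^ (-(N : ℝ) / 2)

noncomputable def expSqWeight {V : Type*} [Norm V] (ε : ℝ) (x : V) : ℝ≥0∞ :=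
  ENNReal.ofReal (Real.exp (ε / 2 * ‖x‖ ^ 2))

noncomputable def gaussExpMoment (N : ℕ) (ε : ℝ) (S : Set (EuclideanSpace ℝ (Fin N))) : ℝ≥0∞ :=
  ∫⁻ x in S, expSqWeight ε x ∂(gaussMeasure N)

noncomputable def mehlerTailBound (N : ℕ) (T : ℝ) (A B : Set (EuclideanSpace ℝ (Fin N))) :
    ℝ≥0∞ :=
  ENNReal.ofReal (mehlerTailConst N T) * gaussExpMoment N (mehlerTailRate T) A *
    gaussExpMoment N (mehlerTailRate T) B

lemma one_sub_exp_neg_pos {a : ℝ} (ha : 0 < a) : 0 < 1 - Real.exp (-a) :=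
  sub_pos.2 (Real.exp_lt_one_iff.2 (neg_lt_zero.2 ha))

lemma mehlerTailRate_le_half {T : ℝ} (hT : 1 ≤ T) : mehlerTailRate T ≤ 1 / 2 := by
  have h1 : Real.exp (-T) ≤ Real.exp (-1) := Real.exp_le_exp.mpr (by linarith)
  have h2 : Real.exp (-1 : ℝ) < 0.37 := by
    rw [Real.exp_neg, inv_lt_iff_one_lt_mul₀ (Real.exp_pos 1)]
    nlinarith [Real.exp_one_gt_d9]
  have h3 : Real.exp (-2 : ℝ) = Real.exp (-1) * Real.exp (-1) := by
    rw [← Real.exp_add]; norm_num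
  rw [mehlerTailRate, div_le_iff₀ (one_sub_exp_neg_pos two_pos)]
  nlinarith [Real.exp_pos (-1 : ℝ)]

lemma tendsto_mehlerTailRate_atTop : Tendsto mehlerTailRate atTop (𝓝 0) := by
  unfold mehlerTailRate
  simpa using tendsto_exp_neg_atTop_nhds_zero.div_const (1 - Real.exp (-2))

lemma tendsto_mehlerTailConst_atTop (N : ℕ) :
    Tendsto (mehlerTailConst N) atTop (𝓝 1) := by
  unfold mehlerTailConst
  have h : Tendsto (fun T : ℝ => 1 - Real.exp (-2 * T)) atTop (𝓝 1) := by
    simpa using tendsto_const_nhds.sub <| Real.tendsto_exp_atBot.comp <|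
      tendsto_id.const_mul_atTop_of_neg (by norm_num : (-2 : ℝ) < 0)
  simpa [Function.comp_def] using
    (Real.continuousAt_rpow_const 1 (-(N : ℝ) / 2) (Or.inl one_ne_zero)).tendsto.comp h

lemma mehlerTailConst_nonneg (N : ℕ) {T : ℝ} (hT : 0 ≤ T) : 0 ≤ mehlerTailConst N T :=
  Real.rpow_nonneg (sub_nonneg.2 (Real.exp_le_one_iff.2 (by linarith))) _

lemma mehler_nonneg (N : ℕ) {t : ℝ} (ht : 0 < t) (x y : EuclideanSpace ℝ (Fin N)) :
    0 ≤ mehler N t x y := by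
  have : 0 < 1 - Real.exp (-2 * t) := by simpa using one_sub_exp_neg_pos (by linarith : 0 < 2 * t)
  unfold mehler
  positivity

lemma mehler_le_of_le (N : ℕ) {T t : ℝ} (hT : 1 ≤ T) (hTt : T ≤ t)
    (x y : EuclideanSpace ℝ (Fin N)) :
    mehler N t x y ≤ mehlerTailConst N T *
      (Real.exp (mehlerTailRate T / 2 * ‖x‖ ^ 2) * Real.exp (mehlerTailRate T / 2 * ‖y‖ ^ 2)) := by
  have hden : 1 - Real.exp (-2) ≤ 1 - Real.exp (-2 * t) :=
    sub_le_sub_left (Real.exp_le_exp.2 (by linarith)) 1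
  have hprefactor : (1 - Real.exp (-2 * t)) ^ (-(N : ℝ) / 2) ≤ mehlerTailConst N T := by
    have : 0 < 1 - Real.exp (-2 * T) := by simpa using one_sub_exp_neg_pos (by linarith : 0 < 2 * T)
    refine Real.rpow_le_rpow_of_nonpos this ?_ (by simp [neg_div]; positivity)
    exact sub_le_sub_left (Real.exp_le_exp.2 (by linarith)) 1
  have hnum : -(Real.exp (-2 * t) * ‖x‖ ^ 2 - 2 * Real.exp (-t) * inner ℝ x y +
      Real.exp (-2 * t) * ‖y‖ ^ 2) ≤ Real.exp (-T) * (‖x‖ ^ 2 + ‖y‖ ^ 2) := by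
    have hxy : 2 * inner ℝ x y ≤ ‖x‖ ^ 2 + ‖y‖ ^ 2 := by
      nlinarith [real_inner_le_norm x y, sq_nonneg (‖x‖ - ‖y‖)]
    have hexp : Real.exp (-t) ≤ Real.exp (-T) := Real.exp_le_exp.2 (by linarith)
    nlinarith [Real.exp_pos (-t), Real.exp_pos (-2 * t), sq_nonneg ‖x‖, sq_nonneg ‖y‖]
  have hexponent : -(Real.exp (-2 * t) * ‖x‖ ^ 2 - 2 * Real.exp (-t) * inner ℝ x y +
      Real.exp (-2 * t) * ‖y‖ ^ 2) / (2 * (1 - Real.exp (-2 * t))) ≤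
      mehlerTailRate T / 2 * ‖x‖ ^ 2 + mehlerTailRate T / 2 * ‖y‖ ^ 2 := by
    calc _ ≤ Real.exp (-T) * (‖x‖ ^ 2 + ‖y‖ ^ 2) / (2 * (1 - Real.exp (-2))) := by
          have := one_sub_exp_neg_pos two_pos
          gcongr
      _ = _ := by rw [mehlerTailRate]; field_simp
  rw [mehler, ← Real.exp_add]
  gcongr
  exact mehlerTailConst_nonneg N (by linarith)

lemma rpow_neg_half_sub_one_le {s s₀ T t : ℝ} (hs : 0 ≤ s) (hss₀ : s ≤ s₀) (hT : 1 ≤ T)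
    (ht : 0 < t) (htT : t ≤ T) :
    t ^ (-s / 2 - 1) ≤ T ^ (s₀ / 2) * t ^ (-s₀ / 2 - 1) := by
  have hsplit : t ^ (-s / 2 - 1) = t ^ ((s₀ - s) / 2) * t ^ (-s₀ / 2 - 1) := by
    rw [← Real.rpow_add ht]; ring_nf
  rw [hsplit]
  gcongr
  calc t ^ ((s₀ - s) / 2) ≤ T ^ ((s₀ - s) / 2) := by gcongr
    _ ≤ T ^ (s₀ / 2) := Real.rpow_le_rpow_of_exponent_le hT (by linarith)

lemma setLIntegral_Ioc_mehler_le (N : ℕ) {s s₀ T : ℝ} (hs : 0 ≤ s) (hss₀ : s ≤ s₀)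
    (hT : 1 ≤ T) (x y : EuclideanSpace ℝ (Fin N)) :
    ∫⁻ t in Ioc 0 T, ENNReal.ofReal (mehler N t x y * t ^ (-s / 2 - 1)) ≤
      ENNReal.ofReal (T ^ (s₀ / 2)) * Kker N s₀ x y := by
  calc ∫⁻ t in Ioc 0 T, ENNReal.ofReal (mehler N t x y * t ^ (-s / 2 - 1))
      ≤ ∫⁻ t in Ioc 0 T,
          ENNReal.ofReal (T ^ (s₀ / 2)) * ENNReal.ofReal (mehler N t x y * t ^ (-s₀ / 2 - 1)) := by
        refine setLIntegral_mono' measurableSet_Ioc fun t ht => ?_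
        rw [← ENNReal.ofReal_mul (by positivity)]
        refine ENNReal.ofReal_le_ofReal ?_
        calc mehler N t x y * t ^ (-s / 2 - 1)
            ≤ mehler N t x y * (T ^ (s₀ / 2) * t ^ (-s₀ / 2 - 1)) := by
              gcongr
              · exact mehler_nonneg N ht.1 x y
              · exact rpow_neg_half_sub_one_le hs hss₀ hT ht.1 ht.2
          _ = T ^ (s₀ / 2) * (mehler N t x y * t ^ (-s₀ / 2 - 1)) := by ring
    _ = ENNReal.ofReal (T ^ (s₀ / 2)) *
          ∫⁻ t in Ioc 0 T, ENNReal.ofReal (mehler N t x y * t ^ (-s₀ / 2 - 1)) :=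
        lintegral_const_mul' _ _ ENNReal.ofReal_ne_top
    _ ≤ ENNReal.ofReal (T ^ (s₀ / 2)) * Kker N s₀ x y := by
        gcongr
        exact lintegral_mono_set Ioc_subset_Ioi_self

lemma setLIntegral_Ioi_rpow_le {s T : ℝ} (hs : 0 < s) (hT : 1 ≤ T) :
    ∫⁻ t in Ioi T, ENNReal.ofReal (t ^ (-s / 2 - 1)) ≤ ENNReal.ofReal (2 / s) := by
  have hT0 : 0 < T := by linarith
  rw [← ofReal_integral_eq_lintegral_ofReal (integrableOn_Ioi_rpow_of_lt (by linarith) hT0)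
    (ae_restrict_of_forall_mem measurableSet_Ioi fun t ht => Real.rpow_nonneg (hT0.trans ht).le _),
    integral_Ioi_rpow_of_lt (by linarith) hT0]
  refine ENNReal.ofReal_le_ofReal ?_
  have hTs : T ^ (-s / 2) ≤ 1 := Real.rpow_le_one_of_one_le_of_nonpos hT (by linarith)
  calc -T ^ (-s / 2 - 1 + 1) / (-s / 2 - 1 + 1) = T ^ (-s / 2) * (2 / s) := by
        rw [sub_add_cancel]; field_simp
    _ ≤ 2 / s := mul_le_of_le_one_left (by positivity) hTs

lemma setLIntegral_Ioi_mehler_le (N : ℕ) {s T : ℝ} (hs : 0 < s) (hT : 1 ≤ T)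
    (x y : EuclideanSpace ℝ (Fin N)) :
    ∫⁻ t in Ioi T, ENNReal.ofReal (mehler N t x y * t ^ (-s / 2 - 1)) ≤
      ENNReal.ofReal (2 / s) * (ENNReal.ofReal (mehlerTailConst N T) *
        expSqWeight (mehlerTailRate T) x * expSqWeight (mehlerTailRate T) y) := by
  set G := ENNReal.ofReal (mehlerTailConst N T) *
    expSqWeight (mehlerTailRate T) x * expSqWeight (mehlerTailRate T) y
  calc ∫⁻ t in Ioi T, ENNReal.ofReal (mehler N t x y * t ^ (-s / 2 - 1))
      ≤ ∫⁻ t in Ioi T, G * ENNReal.ofReal (t ^ (-s / 2 - 1)) := by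
        refine setLIntegral_mono' measurableSet_Ioi fun t ht => ?_
        have ht0 : 0 < t := by linarith [mem_Ioi.1 ht]
        calc ENNReal.ofReal (mehler N t x y * t ^ (-s / 2 - 1))
            ≤ ENNReal.ofReal (mehlerTailConst N T * (Real.exp (mehlerTailRate T / 2 * ‖x‖ ^ 2) *
                Real.exp (mehlerTailRate T / 2 * ‖y‖ ^ 2)) * t ^ (-s / 2 - 1)) := by
              gcongr
              exact mehler_le_of_le N hT (le_of_lt ht) x y
          _ = G * ENNReal.ofReal (t ^ (-s / 2 - 1)) := by
              have hc := mehlerTailConst_nonneg N (zero_le_one.trans hT)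
              rw [ENNReal.ofReal_mul (by positivity), ENNReal.ofReal_mul hc,
                ENNReal.ofReal_mul (Real.exp_nonneg _)]
              simp only [G, expSqWeight, mul_assoc]
    _ = G * ∫⁻ t in Ioi T, ENNReal.ofReal (t ^ (-s / 2 - 1)) :=
        lintegral_const_mul' _ _ (by simp [G, expSqWeight, ENNReal.mul_ne_top])
    _ ≤ G * ENNReal.ofReal (2 / s) := by gcongr; exact setLIntegral_Ioi_rpow_le hs hT
    _ = ENNReal.ofReal (2 / s) * G := mul_comm _ _

lemma Kker_le (N : ℕ) {s s₀ T : ℝ} (hs : 0 < s) (hss₀ : s ≤ s₀) (hT : 1 ≤ T)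
    (x y : EuclideanSpace ℝ (Fin N)) :
    Kker N s x y ≤ ENNReal.ofReal (T ^ (s₀ / 2)) * Kker N s₀ x y +
      ENNReal.ofReal (2 / s) * (ENNReal.ofReal (mehlerTailConst N T) *
        expSqWeight (mehlerTailRate T) x * expSqWeight (mehlerTailRate T) y) := by
  rw [Kker, ← Ioc_union_Ioi_eq_Ioi (zero_le_one.trans hT),
    lintegral_union measurableSet_Ioi (Ioc_disjoint_Ioi le_rfl)]
  exact add_le_add (setLIntegral_Ioc_mehler_le N hs.le hss₀ hT x y)
    (setLIntegral_Ioi_mehler_le N hs hT x y)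

lemma measurable_expSqWeight {V : Type*} [NormedAddCommGroup V] [MeasurableSpace V]
    [OpensMeasurableSpace V] (ε : ℝ) : Measurable (expSqWeight ε : V → ℝ≥0∞) := by
  unfold expSqWeight
  fun_prop

lemma Lgamma_le (N : ℕ) {s s₀ T : ℝ} (hs : 0 < s) (hss₀ : s ≤ s₀) (hT : 1 ≤ T)
    (A B : Set (EuclideanSpace ℝ (Fin N))) :
    Lgamma N s A B ≤ ENNReal.ofReal (T ^ (s₀ / 2)) * Lgamma N s₀ A B +
      ENNReal.ofReal (2 / s) * mehlerTailBound N T A B := by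
  set γ := gaussMeasure N
  set c₁ := ENNReal.ofReal (T ^ (s₀ / 2))
  set c := ENNReal.ofReal (2 / s) * ENNReal.ofReal (mehlerTailConst N T)
  set w : EuclideanSpace ℝ (Fin N) → ℝ≥0∞ := expSqWeight (mehlerTailRate T)
  have hw : Measurable w := measurable_expSqWeight _
  calc Lgamma N s A B ≤ ∫⁻ x in A, ∫⁻ y in B, (c₁ * Kker N s₀ x y + c * w x * w y) ∂γ ∂γ := by
        unfold Lgamma
        gcongr with x y
        exact (Kker_le N hs hss₀ hT x y).trans_eq (by simp only [c₁, c, w, mul_assoc])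
    _ = ∫⁻ x in A, (c₁ * ∫⁻ y in B, Kker N s₀ x y ∂γ +
          c * w x * gaussExpMoment N (mehlerTailRate T) B) ∂γ := by
        refine lintegral_congr fun x => ?_
        rw [lintegral_add_right _ (hw.const_mul _), lintegral_const_mul' _ _ ENNReal.ofReal_ne_top,
          lintegral_const_mul _ hw]
        rfl
    _ = c₁ * Lgamma N s₀ A B + ENNReal.ofReal (2 / s) * mehlerTailBound N T A B := by
        rw [lintegral_add_right _ ((hw.const_mul _).mul_const _),
          lintegral_const_mul' _ _ ENNReal.ofReal_ne_top, lintegral_mul_const _ (hw.const_mul _),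
          lintegral_const_mul _ hw, mehlerTailBound]
        simp only [c, mul_assoc]
        rfl

noncomputable def perimeterTailBound (N : ℕ) (T : ℝ) (E Ω : Set (EuclideanSpace ℝ (Fin N))) :
    ℝ≥0∞ :=
  mehlerTailBound N T (E ∩ Ω) (Eᶜ ∩ Ω) + mehlerTailBound N T (E ∩ Ω) (Eᶜ ∩ Ωᶜ) +
    mehlerTailBound N T (E ∩ Ωᶜ) (Eᶜ ∩ Ω)

lemma ofReal_mul_Pgamma_le (N : ℕ) {s s₀ T : ℝ} (hs : 0 < s) (hss₀ : s ≤ s₀) (hT : 1 ≤ T)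
    (E Ω : Set (EuclideanSpace ℝ (Fin N))) :
    ENNReal.ofReal s * Pgamma N s E Ω ≤
      ENNReal.ofReal s * (ENNReal.ofReal (T ^ (s₀ / 2)) * Pgamma N s₀ E Ω) +
        2 * perimeterTailBound N T E Ω := by
  have hP : Pgamma N s E Ω ≤ ENNReal.ofReal (T ^ (s₀ / 2)) * Pgamma N s₀ E Ω +
      ENNReal.ofReal (2 / s) * perimeterTailBound N T E Ω := by
    unfold Pgamma perimeterTailBound
    refine (add_le_add (add_le_add (Lgamma_le N hs hss₀ hT _ _) (Lgamma_le N hs hss₀ hT _ _))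
      (Lgamma_le N hs hss₀ hT _ _)).trans_eq ?_
    ring
  have h2 : ENNReal.ofReal s * ENNReal.ofReal (2 / s) = 2 := by
    rw [← ENNReal.ofReal_mul hs.le, mul_div_cancel₀ _ hs.ne', ENNReal.ofReal_ofNat]
  calc ENNReal.ofReal s * Pgamma N s E Ω
      ≤ ENNReal.ofReal s * (ENNReal.ofReal (T ^ (s₀ / 2)) * Pgamma N s₀ E Ω +
          ENNReal.ofReal (2 / s) * perimeterTailBound N T E Ω) := by gcongr
    _ = _ := by rw [mul_add, ← mul_assoc _ (ENNReal.ofReal (2 / s)), h2]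

lemma limsup_nhdsGT_zero_le_of_le_ofReal_mul_add {f : ℝ → ℝ≥0∞} {C D : ℝ≥0∞} (hC : C ≠ ∞)
    (h : ∀ᶠ s in 𝓝[>] 0, f s ≤ ENNReal.ofReal s * C + D) : limsup f (𝓝[>] 0) ≤ D := by
  have hs : Tendsto (fun s : ℝ => ENNReal.ofReal s) (𝓝[>] 0) (𝓝 0) := by
    simpa using (ENNReal.continuous_ofReal.tendsto 0).mono_left nhdsWithin_le_nhds
  have hlim : Tendsto (fun s => ENNReal.ofReal s * C + D) (𝓝[>] 0) (𝓝 D) := by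
    simpa using (ENNReal.Tendsto.mul_const hs (Or.inr hC)).add_const D
  exact (limsup_le_limsup h).trans_eq hlim.limsup_eq

lemma integrable_exp_neg_mul_sq_norm {V : Type*} [NormedAddCommGroup V] [InnerProductSpace ℝ V]
    [FiniteDimensional ℝ V] [MeasurableSpace V] [BorelSpace V] {b : ℝ} (hb : 0 < b) :
    Integrable fun x : V => Real.exp (-b * ‖x‖ ^ 2) := by
  refine (GaussianFourier.integrable_cexp_neg_mul_sq_norm_add
    (b := (b : ℂ)) (by simpa using hb) 0 (0 : V)).norm.congr (Eventually.of_forall fun x => ?_)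
  simp [Complex.norm_exp, ← Complex.ofReal_pow]

lemma gaussExpMoment_univ_ne_top (N : ℕ) {ε : ℝ} (hε : ε < 1) :
    gaussExpMoment N ε univ ≠ ∞ := by
  have hdensity : Measurable fun x => ENNReal.ofReal (gaussDensity N x) := by
    unfold gaussDensity; fun_prop
  have hb : 0 < (1 - ε) / 2 := by linarith
  rw [gaussExpMoment, Measure.restrict_univ, gaussMeasure,
    lintegral_withDensity_eq_lintegral_mul _ hdensity (measurable_expSqWeight ε)]
  have hprod (x : EuclideanSpace ℝ (Fin N)) :
      ENNReal.ofReal (gaussDensity N x) * expSqWeight ε x =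
        ENNReal.ofReal ((2 * π) ^ (-(N : ℝ) / 2) * Real.exp (-((1 - ε) / 2) * ‖x‖ ^ 2)) := by
    rw [expSqWeight, ← ENNReal.ofReal_mul (by unfold gaussDensity; positivity), gaussDensity,
      mul_assoc, ← Real.exp_add]
    ring_nf
  simp only [Pi.mul_apply, hprod]
  rw [← ofReal_integral_eq_lintegral_ofReal ((integrable_exp_neg_mul_sq_norm hb).const_mul _)
    (Eventually.of_forall fun x => by positivity)]
  exact ENNReal.ofReal_ne_top

lemma gaussExpMoment_ne_top (N : ℕ) {ε : ℝ} (hε : ε < 1) (S : Set (EuclideanSpace ℝ (Fin N))) :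
    gaussExpMoment N ε S ≠ ∞ :=
  ne_top_of_le_ne_top (gaussExpMoment_univ_ne_top N hε) (lintegral_mono_set (subset_univ S))

lemma gaussMeasure_ne_top (N : ℕ) (S : Set (EuclideanSpace ℝ (Fin N))) :
    gaussMeasure N S ≠ ∞ := by
  have h := gaussExpMoment_ne_top N zero_lt_one S
  simpa [gaussExpMoment, expSqWeight] using h

lemma tendsto_gaussExpMoment_mehlerTailRate (N : ℕ) (S : Set (EuclideanSpace ℝ (Fin N))) :
    Tendsto (fun T => gaussExpMoment N (mehlerTailRate T) S) atTop (𝓝 (gaussMeasure N S)) := by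
  have h := tendsto_lintegral_filter_of_dominated_convergence (μ := (gaussMeasure N).restrict S)
    (l := atTop) (F := fun T => expSqWeight (mehlerTailRate T)) (f := fun _ => 1)
    (expSqWeight (1 / 2))
    (Eventually.of_forall fun T => measurable_expSqWeight _) ?_
    (gaussExpMoment_ne_top N (by norm_num) S) ?_
  · simpa [gaussExpMoment] using h
  · filter_upwards [eventually_ge_atTop (1 : ℝ)] with T hT
    refine Eventually.of_forall fun x => ENNReal.ofReal_le_ofReal (Real.exp_le_exp.2 ?_)
    have := mehlerTailRate_le_half hT
    gcongr
  · refine Eventually.of_forall fun x => ?_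
    have h0 : Tendsto (fun T => mehlerTailRate T / 2 * ‖x‖ ^ 2) atTop (𝓝 0) := by
      simpa using (tendsto_mehlerTailRate_atTop.div_const 2).mul_const (‖x‖ ^ 2)
    simpa [expSqWeight, Function.comp_def] using (ENNReal.continuous_ofReal.tendsto _).comp
      ((Real.continuous_exp.tendsto 0).comp h0)

lemma tendsto_mehlerTailBound (N : ℕ) (A B : Set (EuclideanSpace ℝ (Fin N))) :
    Tendsto (fun T => mehlerTailBound N T A B) atTop (𝓝 (gaussMeasure N A * gaussMeasure N B)) := by
  have hc : Tendsto (fun T => ENNReal.ofReal (mehlerTailConst N T)) atTop (𝓝 1) := by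
    simpa [Function.comp_def] using
      (ENNReal.continuous_ofReal.tendsto 1).comp (tendsto_mehlerTailConst_atTop N)
  have hA := (ENNReal.Tendsto.mul hc (Or.inl one_ne_zero)
    (tendsto_gaussExpMoment_mehlerTailRate N A) (Or.inr ENNReal.one_ne_top))
  simpa [mehlerTailBound] using ENNReal.Tendsto.mul hA (Or.inr (gaussMeasure_ne_top N B))
    (tendsto_gaussExpMoment_mehlerTailRate N B) (Or.inr (by simpa using gaussMeasure_ne_top N A))

theorem stmt_2_general (N : ℕ) (Ω E : Set (EuclideanSpace ℝ (Fin N)))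
    (hΩopen : IsOpen Ω)
    (s₀ : ℝ) (hs₀ : s₀ ∈ Set.Ioo (0 : ℝ) 1) (hfin : Pgamma N s₀ E Ω < ⊤) :
    Filter.limsup (fun s : ℝ => ENNReal.ofReal s * Pgamma N s E Ω)
      (nhdsWithin 0 (Set.Ioi 0))
      ≤ 2 * (gaussMeasure N E * gaussMeasure N (Ω \ E) +
        gaussMeasure N (E ∩ Ω) * gaussMeasure N (Eᶜ ∩ Ωᶜ)) := by
  set γ := gaussMeasure N
  have hbound : ∀ T ≥ 1, limsup (fun s : ℝ => ENNReal.ofReal s * Pgamma N s E Ω) (𝓝[>] 0) ≤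
      2 * perimeterTailBound N T E Ω := fun T hT =>
    limsup_nhdsGT_zero_le_of_le_ofReal_mul_add (ENNReal.mul_ne_top ENNReal.ofReal_ne_top hfin.ne)
      (by filter_upwards [Ioc_mem_nhdsGT hs₀.1] with s hs
          using ofReal_mul_Pgamma_le N hs.1 hs.2 hT E Ω)
  have hlim : Tendsto (fun T => 2 * perimeterTailBound N T E Ω) atTop
      (𝓝 (2 * (γ (E ∩ Ω) * γ (Eᶜ ∩ Ω) + γ (E ∩ Ω) * γ (Eᶜ ∩ Ωᶜ) + γ (E ∩ Ωᶜ) * γ (Eᶜ ∩ Ω)))) :=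
    ENNReal.Tendsto.const_mul ((((tendsto_mehlerTailBound N _ _).add
      (tendsto_mehlerTailBound N _ _))).add (tendsto_mehlerTailBound N _ _))
      (Or.inr ENNReal.ofNat_ne_top)
  refine (ge_of_tendsto hlim (eventually_atTop.2 ⟨1, hbound⟩)).trans_eq ?_
  have hsplit : γ (E ∩ Ω) + γ (E ∩ Ωᶜ) = γ E := by
    simpa only [sdiff_eq] using measure_inter_add_sdiff E hΩopen.measurableSet
  rw [sdiff_eq, inter_comm Ω, ← hsplit]
  ring

/-- $\limsup_{s→0^+} s P^γ_s(E;Ω) ≤ 2(γ(E)γ(Ω\setminus E)+γ(E∩Ω)γ(E^c∩Ω^c))$. -/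
theorem stmt_2 (N : ℕ) (Ω E : Set (EuclideanSpace ℝ (Fin N)))
    (hΩopen : IsOpen Ω) (hΩne : Ω.Nonempty) (hE : MeasurableSet E)
    (s₀ : ℝ) (hs₀ : s₀ ∈ Set.Ioo (0 : ℝ) 1) (hfin : Pgamma N s₀ E Ω < ⊤) :
    Filter.limsup (fun s : ℝ => ENNReal.ofReal s * Pgamma N s E Ω)
      (nhdsWithin 0 (Set.Ioi 0))
      ≤ 2 * (gaussMeasure N E * gaussMeasure N (Ω \ E) +
        gaussMeasure N (E ∩ Ω) * gaussMeasure N (Eᶜ ∩ Ωᶜ)) :=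
  stmt_2_general N Ω E hΩopen s₀ hs₀ hfin
end

section
/- Let Ω ⊆ ℝ^N be a nonempty open set. Then for every measurable set E ⊆ ℝ^N, liminf_{s→0⁺} s·P^γ_s(E;Ω) ≥ 2(γ(E)γ(Ω\E) + γ(E∩Ω)γ(Eᶜ∩Ωᶜ)). -/
open MeasureTheory Real Set Filter

/-!
For `t ≥ T ≥ 1` the Mehler kernel is at least `exp (-2e^{-T} (|x|² + |y|²))`: its prefactor
is `≥ 1` and the denominator in its exponent is `≥ 1`. Keeping only `t > T` in the integral
defining `K_s` gives `s K_s(x, y) ≥ 2 T^{-s/2} g_T(x) g_T(y)` with `g_T = gaussCutoff T`, i.e.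
`g_T(x) = exp (-2e^{-T} |x|²)`, hence `s L_s(A, B) ≥ 2 T^{-s/2} ∫_A g_T dγ ∫_B g_T dγ`.
Letting `s → 0` and then `T → ∞` (monotone convergence, `g_T ↑ 1`) yields
`liminf s L_s(A, B) ≥ 2 γ(A) γ(B)`. The theorem follows by superadditivity of `liminf` over the
three terms of `P_s`, using `γ(E) = γ(E ∩ Ω) + γ(E \ Ω)`.
-/

open scoped ENNReal Topology

lemma exp_neg_le_rpow_mul_exp_of_sq_le_half (N : ℕ) {u a b w : ℝ} (hu : 0 ≤ u)
    (hu2 : u ^ 2 ≤ 1 / 2) (hw : |w| ≤ a * b) :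
    exp (-(2 * u * (a ^ 2 + b ^ 2))) ≤
      (1 - u ^ 2) ^ (-(N : ℝ) / 2) *
        exp (-(u ^ 2 * a ^ 2 - 2 * u * w + u ^ 2 * b ^ 2) / (2 * (1 - u ^ 2))) := by
  have hu1 : u ≤ 1 := by nlinarith
  have hD : 1 ≤ 2 * (1 - u ^ 2) := by linarith
  have hprefactor : 1 ≤ (1 - u ^ 2) ^ (-(N : ℝ) / 2) :=
    one_le_rpow_of_pos_of_le_one_of_nonpos (by linarith) (by nlinarith)
      (by have := N.cast_nonneg (α := ℝ); linarith)
  have hc : 0 ≤ 2 * u * (a ^ 2 + b ^ 2) := by positivity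
  have hnum : u ^ 2 * a ^ 2 - 2 * u * w + u ^ 2 * b ^ 2 ≤ 2 * u * (a ^ 2 + b ^ 2) := by
    nlinarith [neg_abs_le w, sq_nonneg (a - b), mul_le_mul_of_nonneg_left hu1 hu]
  calc exp (-(2 * u * (a ^ 2 + b ^ 2)))
      ≤ exp (-(u ^ 2 * a ^ 2 - 2 * u * w + u ^ 2 * b ^ 2) / (2 * (1 - u ^ 2))) := by
        rw [exp_le_exp, neg_div, neg_le_neg_iff, div_le_iff₀ (by linarith)]
        exact hnum.trans (le_mul_of_one_le_right hc hD)
    _ ≤ _ := le_mul_of_one_le_left (exp_pos _).le hprefactor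

lemma exp_neg_le_mehler (N : ℕ) {t : ℝ} (ht : 1 ≤ t) (x y : EuclideanSpace ℝ (Fin N)) :
    exp (-(2 * exp (-t) * (‖x‖ ^ 2 + ‖y‖ ^ 2))) ≤ mehler N t x y := by
  have hsq : exp (-2 * t) = exp (-t) ^ 2 := by rw [← exp_nat_mul]; ring_nf
  have hhalf : exp (-t) ^ 2 ≤ 1 / 2 := by
    rw [← hsq]
    exact (exp_le_exp.2 (by linarith)).trans exp_neg_one_lt_half.le
  rw [mehler, hsq]
  exact exp_neg_le_rpow_mul_exp_of_sq_le_half N (exp_pos _).le hhalf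
    (abs_real_inner_le_norm x y)

lemma lintegral_Ioi_rpow_of_lt {a c : ℝ} (ha : a < -1) (hc : 0 < c) :
    ∫⁻ t in Ioi c, ENNReal.ofReal (t ^ a) = ENNReal.ofReal (-c ^ (a + 1) / (a + 1)) := by
  rw [← ofReal_integral_eq_lintegral_ofReal (integrableOn_Ioi_rpow_of_lt ha hc),
    integral_Ioi_rpow_of_lt ha hc]
  filter_upwards [ae_restrict_mem measurableSet_Ioi] with t ht
  exact rpow_nonneg (hc.trans ht).le a

section Cutoff

variable {V : Type*} [NormedAddCommGroup V]

noncomputable def gaussCutoff (T : ℝ) (x : V) : ℝ≥0∞ :=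
  ENNReal.ofReal (exp (-(2 * exp (-T) * ‖x‖ ^ 2)))

lemma gaussCutoff_mul_gaussCutoff (T : ℝ) (x y : V) :
    gaussCutoff T x * gaussCutoff T y =
      ENNReal.ofReal (exp (-(2 * exp (-T) * (‖x‖ ^ 2 + ‖y‖ ^ 2)))) := by
  rw [gaussCutoff, gaussCutoff, ← ENNReal.ofReal_mul (exp_pos _).le, ← exp_add]
  ring_nf

lemma monotone_gaussCutoff (x : V) : Monotone fun T : ℝ => gaussCutoff T x := by
  intro T T' h
  simp only [gaussCutoff]
  gcongr

lemma tendsto_gaussCutoff (x : V) :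
    Tendsto (fun T : ℝ => gaussCutoff T x) atTop (𝓝 1) := by
  have h : Tendsto (fun T : ℝ => exp (-(2 * exp (-T) * ‖x‖ ^ 2))) atTop (𝓝 1) := by
    simpa using ((tendsto_exp_neg_atTop_nhds_zero.const_mul 2).mul_const (‖x‖ ^ 2)).neg.rexp
  simpa [gaussCutoff] using ENNReal.tendsto_ofReal h

variable [MeasurableSpace V]

lemma monotone_setLIntegral_gaussCutoff (μ : Measure V) (A : Set V) :
    Monotone fun n : ℕ => ∫⁻ x in A, gaussCutoff (n + 1) x ∂μ :=
  fun m n h => lintegral_mono fun x => monotone_gaussCutoff x (by gcongr)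

variable [OpensMeasurableSpace V]

lemma measurable_gaussCutoff (T : ℝ) : Measurable (gaussCutoff T : V → ℝ≥0∞) := by
  unfold gaussCutoff
  fun_prop

lemma iSup_setLIntegral_gaussCutoff (μ : Measure V) (A : Set V) :
    ⨆ n : ℕ, ∫⁻ x in A, gaussCutoff (n + 1) x ∂μ = μ A := by
  have hmono : Monotone fun (n : ℕ) (x : V) => gaussCutoff ((n : ℝ) + 1) x :=
    fun m n h x => monotone_gaussCutoff x (by gcongr)
  rw [← lintegral_iSup (fun n => measurable_gaussCutoff _) hmono]
  have hsup : ∀ x : V, ⨆ n : ℕ, gaussCutoff ((n : ℝ) + 1) x = 1 := fun x =>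
    iSup_eq_of_tendsto (fun m n h => hmono h x)
      ((tendsto_gaussCutoff x).comp
        (tendsto_atTop_add_const_right _ 1 tendsto_natCast_atTop_atTop))
  simp [hsup]

end Cutoff

lemma gaussCutoff_mul_le_mul_Kker (N : ℕ) {s T : ℝ} (hs : 0 < s) (hT : 1 ≤ T)
    (x y : EuclideanSpace ℝ (Fin N)) :
    ENNReal.ofReal (2 * T ^ (-s / 2)) * (gaussCutoff T x * gaussCutoff T y) ≤
      ENNReal.ofReal s * Kker N s x y := by
  have hT0 : 0 < T := zero_lt_one.trans_le hT
  have hp : -s / 2 - 1 < -1 := by linarith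
  set m := exp (-(2 * exp (-T) * (‖x‖ ^ 2 + ‖y‖ ^ 2)))
  have hm0 : 0 ≤ m := (exp_pos _).le
  have hm : ∀ t ∈ Ioi T, m * t ^ (-s / 2 - 1) ≤ mehler N t x y * t ^ (-s / 2 - 1) := by
    intro t ht
    have hTt : T ≤ t := le_of_lt ht
    refine mul_le_mul_of_nonneg_right ?_ (rpow_nonneg (hT0.trans ht).le _)
    calc m ≤ exp (-(2 * exp (-t) * (‖x‖ ^ 2 + ‖y‖ ^ 2))) := by simp only [m]; gcongr
      _ ≤ mehler N t x y := exp_neg_le_mehler N (hT.trans hTt) x y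
  have hK : ENNReal.ofReal m * ENNReal.ofReal (2 / s * T ^ (-s / 2)) ≤ Kker N s x y :=
    calc ENNReal.ofReal m * ENNReal.ofReal (2 / s * T ^ (-s / 2))
        = ∫⁻ t in Ioi T, ENNReal.ofReal (m * t ^ (-s / 2 - 1)) := by
          simp_rw [ENNReal.ofReal_mul hm0]
          rw [lintegral_const_mul _ (by fun_prop), lintegral_Ioi_rpow_of_lt hp hT0,
            show -s / 2 - 1 + 1 = -s / 2 by ring]
          congr 1
          field_simp
      _ ≤ ∫⁻ t in Ioi T, ENNReal.ofReal (mehler N t x y * t ^ (-s / 2 - 1)) :=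
          setLIntegral_mono' measurableSet_Ioi fun t ht => ENNReal.ofReal_le_ofReal (hm t ht)
      _ ≤ Kker N s x y := lintegral_mono_set (Ioi_subset_Ioi hT0.le)
  calc ENNReal.ofReal (2 * T ^ (-s / 2)) * (gaussCutoff T x * gaussCutoff T y)
      = ENNReal.ofReal s * (ENNReal.ofReal m * ENNReal.ofReal (2 / s * T ^ (-s / 2))) := by
        rw [gaussCutoff_mul_gaussCutoff, mul_left_comm, ← ENNReal.ofReal_mul hs.le, mul_comm]
        congr 2
        field_simp
    _ ≤ ENNReal.ofReal s * Kker N s x y := by gcongr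

lemma setLIntegral_gaussCutoff_mul_le_mul_Lgamma (N : ℕ) {s T : ℝ} (hs : 0 < s) (hT : 1 ≤ T)
    (A B : Set (EuclideanSpace ℝ (Fin N))) :
    ENNReal.ofReal (2 * T ^ (-s / 2)) *
        ((∫⁻ x in A, gaussCutoff T x ∂gaussMeasure N) *
          ∫⁻ y in B, gaussCutoff T y ∂gaussMeasure N)
      ≤ ENNReal.ofReal s * Lgamma N s A B := by
  rw [← lintegral_lintegral_mul (measurable_gaussCutoff T).aemeasurable
    (measurable_gaussCutoff T).aemeasurable, Lgamma]
  simp_rw [← lintegral_const_mul' _ _ ENNReal.ofReal_ne_top]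
  exact lintegral_mono fun x => lintegral_mono fun y =>
    gaussCutoff_mul_le_mul_Kker N hs hT x y

lemma ENNReal.iSup_mul_iSup_of_monotone {ι : Type*} [Preorder ι] [IsDirectedOrder ι]
    {f g : ι → ℝ≥0∞} (hf : Monotone f) (hg : Monotone g) :
    (⨆ i, f i) * ⨆ i, g i = ⨆ i, f i * g i := by
  simp_rw [ENNReal.iSup_mul, ENNReal.mul_iSup]
  refine le_antisymm (iSup₂_le fun i j => ?_) (iSup_mono fun i => le_iSup_of_le i le_rfl)
  obtain ⟨k, hik, hjk⟩ := exists_ge_ge i j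
  exact le_iSup_of_le k (mul_le_mul' (hf hik) (hg hjk))

lemma ENNReal.le_liminf_add {ι : Type*} {f : Filter ι} {u v : ι → ℝ≥0∞} :
    liminf u f + liminf v f ≤ liminf (u + v) f := by
  simp only [liminf_eq_iSup_iInf]
  refine ENNReal.biSup_add_biSup_le' ⟨univ, univ_mem⟩ ⟨univ, univ_mem⟩ fun s hs t ht => ?_
  exact le_iSup₂_of_le (s ∩ t) (inter_mem hs ht)
    (le_iInf₂ fun i hi => add_le_add (iInf₂_le i hi.1) (iInf₂_le i hi.2))

lemma two_mul_measure_mul_le_liminf_Lgamma (N : ℕ) (A B : Set (EuclideanSpace ℝ (Fin N))) :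
    2 * (gaussMeasure N A * gaussMeasure N B) ≤
      liminf (fun s : ℝ => ENNReal.ofReal s * Lgamma N s A B) (𝓝[>] 0) := by
  rw [← iSup_setLIntegral_gaussCutoff _ A, ← iSup_setLIntegral_gaussCutoff _ B,
    ENNReal.iSup_mul_iSup_of_monotone (monotone_setLIntegral_gaussCutoff _ A)
      (monotone_setLIntegral_gaussCutoff _ B), ENNReal.mul_iSup]
  refine iSup_le fun n => ?_
  set T : ℝ := n + 1
  have hT : 1 ≤ T := by simp [T]
  set c := (∫⁻ x in A, gaussCutoff T x ∂gaussMeasure N) *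
    ∫⁻ y in B, gaussCutoff T y ∂gaussMeasure N
  have hfactor :
      Tendsto (fun s : ℝ => ENNReal.ofReal (2 * T ^ (-s / 2))) (𝓝[>] 0) (𝓝 2) := by
    have hcont : ContinuousAt (fun s : ℝ => 2 * T ^ (-s / 2)) 0 := by
      fun_prop (disch := positivity)
    simpa using ENNReal.tendsto_ofReal (hcont.tendsto.mono_left nhdsWithin_le_nhds)
  calc 2 * c = liminf (fun s : ℝ => ENNReal.ofReal (2 * T ^ (-s / 2)) * c) (𝓝[>] 0) :=
        ((ENNReal.Tendsto.mul_const hfactor (Or.inl two_ne_zero)).liminf_eq).symm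
    _ ≤ _ := liminf_le_liminf (eventually_mem_nhdsWithin.mono fun s hs =>
        setLIntegral_gaussCutoff_mul_le_mul_Lgamma N hs hT A B)

theorem stmt_3_general (N : ℕ) (Ω : Set (EuclideanSpace ℝ (Fin N)))
    (hΩopen : IsOpen Ω) :
    ∀ E : Set (EuclideanSpace ℝ (Fin N)), MeasurableSet E →
    2 * (gaussMeasure N E * gaussMeasure N (Ω \ E) +
        gaussMeasure N (E ∩ Ω) * gaussMeasure N (Eᶜ ∩ Ωᶜ))
      ≤ Filter.liminf (fun s : ℝ => ENNReal.ofReal s * Pgamma N s E Ω)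
          (nhdsWithin 0 (Set.Ioi 0)) := by
  intro E _
  set γ := gaussMeasure N
  set L := fun (A B : Set (EuclideanSpace ℝ (Fin N))) (s : ℝ) =>
    ENNReal.ofReal s * Lgamma N s A B
  have hsplit : γ E = γ (E ∩ Ω) + γ (E ∩ Ωᶜ) := by
    rw [← sdiff_eq, measure_inter_add_sdiff E hΩopen.measurableSet]
  have hP : (fun s : ℝ => ENNReal.ofReal s * Pgamma N s E Ω) =
      L (E ∩ Ω) (Eᶜ ∩ Ω) + L (E ∩ Ω) (Eᶜ ∩ Ωᶜ) + L (E ∩ Ωᶜ) (Eᶜ ∩ Ω) := by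
    ext s
    simp only [L, Pgamma, mul_add, Pi.add_apply]
  calc 2 * (γ E * γ (Ω \ E) + γ (E ∩ Ω) * γ (Eᶜ ∩ Ωᶜ))
      = 2 * (γ (E ∩ Ω) * γ (Eᶜ ∩ Ω)) + 2 * (γ (E ∩ Ω) * γ (Eᶜ ∩ Ωᶜ)) +
          2 * (γ (E ∩ Ωᶜ) * γ (Eᶜ ∩ Ω)) := by
        rw [sdiff_eq, inter_comm, hsplit]; ring
    _ ≤ liminf (L (E ∩ Ω) (Eᶜ ∩ Ω)) (𝓝[>] 0) + liminf (L (E ∩ Ω) (Eᶜ ∩ Ωᶜ)) (𝓝[>] 0) +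
          liminf (L (E ∩ Ωᶜ) (Eᶜ ∩ Ω)) (𝓝[>] 0) := by
        gcongr <;> exact two_mul_measure_mul_le_liminf_Lgamma N _ _
    _ ≤ liminf (L (E ∩ Ω) (Eᶜ ∩ Ω) + L (E ∩ Ω) (Eᶜ ∩ Ωᶜ)) (𝓝[>] 0) +
          liminf (L (E ∩ Ωᶜ) (Eᶜ ∩ Ω)) (𝓝[>] 0) := by
        gcongr
        exact ENNReal.le_liminf_add
    _ ≤ liminf (fun s : ℝ => ENNReal.ofReal s * Pgamma N s E Ω) (𝓝[>] 0) := by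
        rw [hP]
        exact ENNReal.le_liminf_add

/-- $\liminf_{s→0^+} s P^γ_s(E;Ω) ≥ 2(γ(E)γ(Ω\setminus E)+γ(E∩Ω)γ(E^c∩Ω^c))$
for every measurable set $E$. -/
theorem stmt_3 (N : ℕ) (Ω : Set (EuclideanSpace ℝ (Fin N)))
    (hΩopen : IsOpen Ω) (hΩne : Ω.Nonempty) :
    ∀ E : Set (EuclideanSpace ℝ (Fin N)), MeasurableSet E →
    2 * (gaussMeasure N E * gaussMeasure N (Ω \ E) +
        gaussMeasure N (E ∩ Ω) * gaussMeasure N (Eᶜ ∩ Ωᶜ))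
      ≤ Filter.liminf (fun s : ℝ => ENNReal.ofReal s * Pgamma N s E Ω)
          (nhdsWithin 0 (Set.Ioi 0)) :=
  stmt_3_general N Ω hΩopen
end

section
/- For any x, y ∈ ℝ^N with x ≠ y and any s ∈ (0,1), K_s(x,y) ≥ C_{N,s}/|x-y|^{N+s}, where C_{N,s} := 2^{s+N/2} Γ((s+N)/2). -/
/-!
For `t > 0` we have `1 - e^{-2t} ≤ 2t`, and `2t e^{-t} ≤ 1 - e^{-2t}` (that is, `t ≤ sinh t`).
Together with `e^{-2t} ≤ e^{-t}` these bound the Mehler kernel from below by the heat kernel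
`(2t)^{-N/2} exp(-|x-y|²/(4t))`. Integrating the heat kernel against `t^{-s/2-1}` gives exactly
`C_{N,s} |x-y|^{-N-s}`: the substitution `t = 1/u` turns it into a Gamma integral.
-/

open MeasureTheory Real Set Filter

lemma ofReal_setIntegral_le_setLIntegral_ofReal {α : Type*} [MeasurableSpace α] {μ : Measure α}
    {s : Set α} (hs : MeasurableSet s) {f : α → ℝ} (hf : ∀ x ∈ s, 0 ≤ f x) :
    ENNReal.ofReal (∫ x in s, f x ∂μ) ≤ ∫⁻ x in s, ENNReal.ofReal (f x) ∂μ :=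
  calc ENNReal.ofReal (∫ x in s, f x ∂μ) = ‖∫ x in s, f x ∂μ‖ₑ :=
        (Real.enorm_of_nonneg (setIntegral_nonneg hs hf)).symm
    _ ≤ ∫⁻ x in s, ‖f x‖ₑ ∂μ := enorm_integral_le_lintegral_enorm f
    _ = ∫⁻ x in s, ENNReal.ofReal (f x) ∂μ :=
        setLIntegral_congr_fun hs fun x hx => Real.enorm_of_nonneg (hf x hx)

lemma integral_rpow_mul_exp_neg_div_Ioi {a c : ℝ} (ha : 0 < a) (hc : 0 < c) :
    ∫ t in Ioi (0 : ℝ), t ^ (-a - 1) * exp (-(c / t)) = (1 / c) ^ a * Gamma a := by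
  rw [← integral_rpow_mul_exp_neg_mul_Ioi ha hc,
    ← integral_comp_rpow_Ioi (fun u => u ^ (a - 1) * exp (-(c * u))) (p := -1) (by norm_num)]
  refine setIntegral_congr_fun measurableSet_Ioi fun t (ht : 0 < t) => ?_
  have hpow : t ^ (-a - 1) = t ^ ((-1 : ℝ) - 1) * (t ^ (-1 : ℝ)) ^ (a - 1) := by
    rw [← rpow_mul ht.le, ← rpow_add ht]
    ring_nf
  simp only [smul_eq_mul, abs_neg, abs_one, one_mul, hpow, rpow_neg_one, div_eq_mul_inv]
  ring

lemma one_sub_exp_neg_two_mul_le (t : ℝ) : 1 - exp (-2 * t) ≤ 2 * t := by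
  linarith [add_one_le_exp (-2 * t)]

lemma two_mul_mul_exp_neg_le {t : ℝ} (ht : 0 ≤ t) : 2 * t * exp (-t) ≤ 1 - exp (-2 * t) := by
  have hsinh : t ≤ sinh t := self_le_sinh_iff.mpr ht
  have hsq : exp (-2 * t) = exp (-t) * exp (-t) := by rw [← exp_add]; ring_nf
  have hinv : exp t * exp (-t) = 1 := by rw [← exp_add]; simp
  rw [sinh_eq] at hsinh
  nlinarith [exp_pos (-t)]

lemma inner_form_le_mul_norm_sub_sq {E : Type*} [NormedAddCommGroup E] [InnerProductSpace ℝ E]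
    {u v : ℝ} (hvu : v ≤ u) (x y : E) :
    v * ‖x‖ ^ 2 - 2 * u * inner ℝ x y + v * ‖y‖ ^ 2 ≤ u * ‖x - y‖ ^ 2 := by
  rw [norm_sub_sq_real]
  nlinarith [mul_nonneg (sub_nonneg.mpr hvu) (add_nonneg (sq_nonneg ‖x‖) (sq_nonneg ‖y‖))]

lemma rpow_mul_exp_le_mehler (N : ℕ) (x y : EuclideanSpace ℝ (Fin N)) {t : ℝ} (ht : 0 < t) :
    (2 * t) ^ (-(N : ℝ) / 2) * exp (-(‖x - y‖ ^ 2 / 4 / t)) ≤ mehler N t x y := by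
  have hlt : exp (-2 * t) < 1 := exp_lt_one_iff.mpr (by linarith)
  have hprefactor : (2 * t) ^ (-(N : ℝ) / 2) ≤ (1 - exp (-2 * t)) ^ (-(N : ℝ) / 2) :=
    rpow_le_rpow_of_nonpos (by linarith) (one_sub_exp_neg_two_mul_le t)
      (by have : (0 : ℝ) ≤ N := N.cast_nonneg; linarith)
  have hform := inner_form_le_mul_norm_sub_sq (exp_le_exp.mpr (by linarith : -2 * t ≤ -t)) x y
  have hexponent : (exp (-2 * t) * ‖x‖ ^ 2 - 2 * exp (-t) * inner ℝ x y +
      exp (-2 * t) * ‖y‖ ^ 2) / (2 * (1 - exp (-2 * t))) ≤ ‖x - y‖ ^ 2 / 4 / t := by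
    rw [div_div, div_le_div_iff₀ (by linarith) (by positivity)]
    nlinarith [mul_le_mul_of_nonneg_right hform (by positivity : (0 : ℝ) ≤ 4 * t),
      mul_le_mul_of_nonneg_right (two_mul_mul_exp_neg_le ht.le) (sq_nonneg ‖x - y‖)]
  unfold mehler
  exact mul_le_mul hprefactor (exp_le_exp.mpr (by rw [neg_div]; exact neg_le_neg hexponent))
    (exp_pos _).le (rpow_nonneg (by linarith) _)

lemma integral_rpow_mul_exp_neg_div_mul_rpow_Ioi {n s r : ℝ} (hns : 0 < s + n) (hr : 0 < r) :
    ∫ t in Ioi (0 : ℝ), (2 * t) ^ (-n / 2) * exp (-(r ^ 2 / 4 / t)) * t ^ (-s / 2 - 1) =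
      2 ^ (s + n / 2) * Gamma ((s + n) / 2) / r ^ (n + s) := by
  have hintegrand : EqOn (fun t => (2 * t) ^ (-n / 2) * exp (-(r ^ 2 / 4 / t)) * t ^ (-s / 2 - 1))
      (fun t => 2 ^ (-n / 2) * (t ^ (-((s + n) / 2) - 1) * exp (-(r ^ 2 / 4 / t)))) (Ioi 0) := by
    intro t (ht : 0 < t)
    simp only
    rw [mul_rpow zero_le_two ht.le, show -((s + n) / 2) - 1 = -n / 2 + (-s / 2 - 1) by ring,
      rpow_add ht]
    ring
  rw [setIntegral_congr_fun measurableSet_Ioi hintegrand, integral_const_mul,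
    integral_rpow_mul_exp_neg_div_Ioi (by positivity) (by positivity)]
  have hfour : (1 / (r ^ 2 / 4)) ^ ((s + n) / 2) = 2 ^ (s + n) / r ^ (n + s) := by
    rw [one_div_div, div_rpow zero_le_four (sq_nonneg r),
      show (4 : ℝ) = 2 ^ (2 : ℝ) by norm_num, ← rpow_natCast r 2,
      ← rpow_mul zero_le_two, ← rpow_mul hr.le]
    push_cast
    ring_nf
  have htwo : (2 : ℝ) ^ (-n / 2) * 2 ^ (s + n) = 2 ^ (s + n / 2) := by
    rw [← rpow_add two_pos]
    ring_nf
  rw [hfour, ← htwo]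
  ring

/-- lower bound for the kernel:
$K_s(x,y) ≥ C_{N,s}/|x-y|^{N+s}$ with $C_{N,s}=2^{s+N/2}Γ((s+N)/2)$. -/
theorem stmt_5 (N : ℕ) (x y : EuclideanSpace ℝ (Fin N)) (hxy : x ≠ y)
    (s : ℝ) (hs : s ∈ Set.Ioo (0 : ℝ) 1) :
    ENNReal.ofReal ((2 : ℝ) ^ (s + (N : ℝ) / 2) * Real.Gamma ((s + N) / 2) /
        ‖x - y‖ ^ ((N : ℝ) + s))
      ≤ Kker N s x y := by
  have hr : 0 < ‖x - y‖ := norm_pos_iff.mpr (sub_ne_zero.mpr hxy)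
  rw [← integral_rpow_mul_exp_neg_div_mul_rpow_Ioi (by positivity [hs.1]) hr]
  refine (ofReal_setIntegral_le_setLIntegral_ofReal measurableSet_Ioi
    fun t (ht : 0 < t) => by positivity).trans ?_
  exact setLIntegral_mono' measurableSet_Ioi fun t (ht : 0 < t) => ENNReal.ofReal_le_ofReal
    (mul_le_mul_of_nonneg_right (rpow_mul_exp_le_mehler N x y ht) (rpow_nonneg ht.le _))
end

section
/- For any x, y ∈ ℝ^N and any s ∈ (0,1), K_s(x,y) ≤ e^{|x|²/4} e^{|y|²/4} K̃_s(|x-y|), where for r ≥ 0, K̃_s(r) := ∫_0^∞ exp(-e^t r²/(2(e^{2t}-1))) · t^{-s/2-1} (1-e^{-2t})^{-N/2} dt. -/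
open MeasureTheory Real Set Filter

/-- The radial kernel $\tilde K_s$. -/
noncomputable def Ktilde (N : ℕ) (s : ℝ) (r : ℝ) : ENNReal :=
  ∫⁻ t in Ioi (0 : ℝ), ENNReal.ofReal
    (Real.exp (-(Real.exp t * r ^ 2) / (2 * (Real.exp (2 * t) - 1))) *
      (t ^ (-s / 2 - 1) * (1 - Real.exp (-2 * t)) ^ (-(N : ℝ) / 2)))

/-!
Pointwise in `t` the Mehler kernel is dominated by the integrand of `Ktilde`: with `a = e^{-t}`,
the exponent of `e^{|x|²/4} e^{|y|²/4}` times that integrand exceeds the Mehler exponent by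
`(|x|² + |y|²)(1 - a) / (4(1 + a)) ≥ 0`. Integrating in `t` gives the bound.
-/

lemma mehler_exponent_le {E : Type*} [NormedAddCommGroup E] [InnerProductSpace ℝ E]
    {t : ℝ} (ht : 0 < t) (x y : E) :
    -(exp (-2 * t) * ‖x‖ ^ 2 - 2 * exp (-t) * inner ℝ x y + exp (-2 * t) * ‖y‖ ^ 2) /
        (2 * (1 - exp (-2 * t))) ≤
      ‖x‖ ^ 2 / 4 + ‖y‖ ^ 2 / 4 + -(exp t * ‖x - y‖ ^ 2) / (2 * (exp (2 * t) - 1)) := by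
  set a := exp (-t)
  have ha0 : 0 < a := exp_pos _
  have ha1 : a < 1 := exp_lt_one_iff.2 (by linarith)
  have h2t : exp (-2 * t) = a ^ 2 := by rw [← exp_nat_mul]; ring_nf
  have hneg : exp t = a⁻¹ := by rw [show a = (exp t)⁻¹ from exp_neg t, inv_inv]
  have h2neg : exp (2 * t) = a⁻¹ ^ 2 := by rw [← hneg, ← exp_nat_mul]; ring_nf
  rw [h2t, hneg, h2neg, norm_sub_sq_real, ← sub_nonneg]
  have hgap : ‖x‖ ^ 2 / 4 + ‖y‖ ^ 2 / 4 +
        -(a⁻¹ * (‖x‖ ^ 2 - 2 * inner ℝ x y + ‖y‖ ^ 2)) / (2 * (a⁻¹ ^ 2 - 1)) -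
        -(a ^ 2 * ‖x‖ ^ 2 - 2 * a * inner ℝ x y + a ^ 2 * ‖y‖ ^ 2) / (2 * (1 - a ^ 2)) =
      (‖x‖ ^ 2 + ‖y‖ ^ 2) * (1 - a) / (4 * (1 + a)) := by
    have : (1 : ℝ) - a ^ 2 ≠ 0 := by nlinarith
    field_simp
    ring
  rw [hgap]
  have : 0 ≤ 1 - a := by linarith
  positivity

lemma mehler_mul_rpow_le (N : ℕ) (σ : ℝ) {t : ℝ} (ht : 0 < t) (x y : EuclideanSpace ℝ (Fin N)) :
    mehler N t x y * t ^ (-σ / 2 - 1) ≤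
      exp (‖x‖ ^ 2 / 4) * exp (‖y‖ ^ 2 / 4) *
        (exp (-(exp t * ‖x - y‖ ^ 2) / (2 * (exp (2 * t) - 1))) *
          (t ^ (-σ / 2 - 1) * (1 - exp (-2 * t)) ^ (-(N : ℝ) / 2))) := by
  have hweight : 0 ≤ t ^ (-σ / 2 - 1) * (1 - exp (-2 * t)) ^ (-(N : ℝ) / 2) := by
    have : 0 ≤ 1 - exp (-2 * t) := by
      linarith [exp_lt_one_iff.2 (by linarith : -2 * t < 0)]
    positivity
  calc mehler N t x y * t ^ (-σ / 2 - 1)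
      = exp (-(exp (-2 * t) * ‖x‖ ^ 2 - 2 * exp (-t) * inner ℝ x y + exp (-2 * t) * ‖y‖ ^ 2) /
          (2 * (1 - exp (-2 * t)))) *
        (t ^ (-σ / 2 - 1) * (1 - exp (-2 * t)) ^ (-(N : ℝ) / 2)) := by
        rw [mehler]; ring
    _ ≤ exp (‖x‖ ^ 2 / 4 + ‖y‖ ^ 2 / 4 + -(exp t * ‖x - y‖ ^ 2) / (2 * (exp (2 * t) - 1))) *
        (t ^ (-σ / 2 - 1) * (1 - exp (-2 * t)) ^ (-(N : ℝ) / 2)) := by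
        gcongr
        exact mehler_exponent_le ht x y
    _ = _ := by rw [exp_add, exp_add]; ring

theorem stmt_6_general (N : ℕ) (x y : EuclideanSpace ℝ (Fin N)) (s : ℝ) :
    Kker N s x y ≤
      ENNReal.ofReal (Real.exp (‖x‖ ^ 2 / 4) * Real.exp (‖y‖ ^ 2 / 4)) *
        Ktilde N s ‖x - y‖ := by
  rw [Kker, Ktilde, ← lintegral_const_mul' _ _ ENNReal.ofReal_ne_top]
  refine setLIntegral_mono' measurableSet_Ioi fun t ht => ?_
  rw [← ENNReal.ofReal_mul (by positivity)]
  exact ENNReal.ofReal_le_ofReal (mehler_mul_rpow_le N s ht x y)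

/-- upper bound for the kernel:
$K_s(x,y) ≤ e^{|x|^2/4} e^{|y|^2/4} \tilde K_s(|x-y|)$. -/
theorem stmt_6 (N : ℕ) (x y : EuclideanSpace ℝ (Fin N)) (s : ℝ) (hs : s ∈ Set.Ioo (0 : ℝ) 1) :
    Kker N s x y ≤
      ENNReal.ofReal (Real.exp (‖x‖ ^ 2 / 4) * Real.exp (‖y‖ ^ 2 / 4)) *
        Ktilde N s ‖x - y‖ :=
  stmt_6_general N x y s
end

section
/- For any x, y ∈ ℝ^N, lim_{t→0⁺} M_t(x,y)/H_t(|x-y|) = (2π)^{N/2} e^{|x|²/4} e^{|y|²/4}, where H_t(r) := e^{-r²/(4t)}/(4πt)^{N/2} is the Gauss–Weierstrass kernel. -/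
open MeasureTheory Real Set Filter

/-!
Writing `‖x - y‖² = ‖x‖² + ‖y‖² - 2⟪x, y⟫`, the quotient `M_t(x,y) / H_t(|x - y|)` equals
`(4πt / (1 - e^{-2t}))^{N/2} · exp ((‖x‖² + ‖y‖²) c₁(t) - 2⟪x, y⟫ c₂(t))` with
`c₁(t) = 1/(4t) - 1/(2(e^{2t} - 1))` (`Mehler.diagCoeff`) and
`c₂(t) = 1/(4t) - 1/(2(e^t - e^{-t}))` (`Mehler.crossCoeff`).
The singular parts `1/(4t)` cancel, and the second-order expansion
`e^{ct} = 1 + ct + c²t²/2 + o(t²)` gives `c₁(t) → 1/4` and `c₂(t) → 0`,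
while `4πt / (1 - e^{-2t}) → 2π`.
-/

open Real Filter Topology

lemma tendsto_exp_mul_sub_one_div (c : ℝ) :
    Tendsto (fun t => (exp (c * t) - 1) / t) (𝓝[≠] 0) (𝓝 c) := by
  have h : HasDerivAt (fun t => exp (c * t)) c 0 := by
    simpa using ((hasDerivAt_id (0 : ℝ)).const_mul c).exp
  rw [hasDerivAt_iff_tendsto_slope_zero] at h
  simpa [div_eq_inv_mul] using h

lemma tendsto_exp_mul_sub_one_sub_div_sq (c : ℝ) :
    Tendsto (fun t => (exp (c * t) - 1 - c * t) / t ^ 2) (𝓝[≠] 0) (𝓝 (c ^ 2 / 2)) := by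
  have hnum (t : ℝ) :
      HasDerivAt (fun t => exp (c * t) - 1 - c * t) (c * (exp (c * t) - 1)) t := by
    have hct : HasDerivAt (fun t => c * t) c t := by simpa using (hasDerivAt_id t).const_mul c
    exact ((hct.exp.sub_const 1).sub hct).congr_deriv (by ring)
  have hden (t : ℝ) : HasDerivAt (fun t => t ^ 2) (2 * t) t := by
    simpa using hasDerivAt_pow 2 t
  refine HasDerivAt.lhopital_zero_nhdsNE (.of_forall hnum) (.of_forall hden) ?_ ?_ ?_ ?_
  · filter_upwards [self_mem_nhdsWithin] with t ht using mul_ne_zero two_ne_zero ht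
  · exact ((by fun_prop : Continuous fun t => exp (c * t) - 1 - c * t).tendsto' 0 0
      (by simp)).mono_left nhdsWithin_le_nhds
  · exact ((continuous_pow 2).tendsto' 0 0 (by simp)).mono_left nhdsWithin_le_nhds
  · convert (tendsto_exp_mul_sub_one_div c).const_mul (c / 2) using 1
    · ext t
      field_simp
    · congr 1
      ring

lemma tendsto_div_one_sub_exp_neg_two_mul :
    Tendsto (fun t => t / (1 - exp (-2 * t))) (𝓝[≠] 0) (𝓝 (1 / 2)) := by
  refine ((tendsto_exp_mul_sub_one_div (-2)).neg.inv₀ (by norm_num)).congr (fun t => ?_) |>.trans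
    (by norm_num)
  rw [← neg_div, neg_sub, inv_div]

namespace Mehler

noncomputable def diagCoeff (t : ℝ) : ℝ := (4 * t)⁻¹ - exp (-2 * t) / (2 * (1 - exp (-2 * t)))

noncomputable def crossCoeff (t : ℝ) : ℝ := (4 * t)⁻¹ - exp (-t) / (2 * (1 - exp (-2 * t)))

lemma diagCoeff_eq {t : ℝ} (ht : t ≠ 0) :
    diagCoeff t = ((exp (2 * t) - 1 - 2 * t) / t ^ 2) / (4 * ((exp (2 * t) - 1) / t)) := by
  have hu : exp (2 * t) - 1 ≠ 0 := by
    rw [sub_ne_zero, Ne, exp_eq_one_iff]; simpa using ht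
  rw [diagCoeff, neg_mul, exp_neg]
  have hu0 := (exp_pos (2 * t)).ne'
  generalize exp (2 * t) = u at hu hu0 ⊢
  field_simp
  ring

lemma crossCoeff_eq {t : ℝ} (ht : t ≠ 0) :
    crossCoeff t = ((exp (1 * t) - 1 - 1 * t) / t ^ 2 - (exp (-1 * t) - 1 - -1 * t) / t ^ 2) /
      (4 * ((exp (1 * t) - 1) / t - (exp (-1 * t) - 1) / t)) := by
  have h2 : exp (2 * t) = exp t ^ 2 := by rw [← exp_nat_mul]; norm_num
  have hu : exp t ^ 2 - 1 ≠ 0 := by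
    rw [← h2, sub_ne_zero, Ne, exp_eq_one_iff]; simpa using ht
  rw [crossCoeff, neg_mul, one_mul, neg_one_mul, exp_neg, exp_neg, h2]
  have hu0 := (exp_pos t).ne'
  generalize exp t = u at hu hu0 ⊢
  have hlhs : u⁻¹ / (2 * (1 - (u ^ 2)⁻¹)) = u / (2 * (u ^ 2 - 1)) := by
    field_simp
  have hrhs : (u - 1) / t - (u⁻¹ - 1) / t = (u ^ 2 - 1) / (u * t) := by
    field_simp
    ring
  rw [hlhs, hrhs]
  field_simp
  ring

lemma tendsto_diagCoeff : Tendsto diagCoeff (𝓝[≠] 0) (𝓝 (1 / 4)) := by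
  have h := (tendsto_exp_mul_sub_one_sub_div_sq 2).div
    ((tendsto_exp_mul_sub_one_div 2).const_mul 4) (by norm_num)
  refine (h.congr' ?_).trans (by norm_num)
  filter_upwards [self_mem_nhdsWithin] with t ht using (diagCoeff_eq ht).symm

lemma tendsto_crossCoeff : Tendsto crossCoeff (𝓝[≠] 0) (𝓝 0) := by
  have h := ((tendsto_exp_mul_sub_one_sub_div_sq 1).sub
    (tendsto_exp_mul_sub_one_sub_div_sq (-1))).div
    (((tendsto_exp_mul_sub_one_div 1).sub (tendsto_exp_mul_sub_one_div (-1))).const_mul 4)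
    (by norm_num)
  refine (h.congr' ?_).trans (by norm_num)
  filter_upwards [self_mem_nhdsWithin] with t ht using (crossCoeff_eq ht).symm

lemma mehler_div_gaussWeierstrass {N : ℕ} {t : ℝ} (ht : 0 < t) (x y : EuclideanSpace ℝ (Fin N)) :
    mehler N t x y / (exp (-‖x - y‖ ^ 2 / (4 * t)) / (4 * π * t) ^ ((N : ℝ) / 2)) =
      (4 * π * (t / (1 - exp (-2 * t)))) ^ ((N : ℝ) / 2) *
        exp ((‖x‖ ^ 2 + ‖y‖ ^ 2) * diagCoeff t - 2 * inner ℝ x y * crossCoeff t) := by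
  have ha : 0 < 1 - exp (-2 * t) := sub_pos.2 (exp_lt_one_iff.2 (by linarith))
  have hexp : exp (-(exp (-2 * t) * ‖x‖ ^ 2 - 2 * exp (-t) * inner ℝ x y +
        exp (-2 * t) * ‖y‖ ^ 2) / (2 * (1 - exp (-2 * t)))) =
      exp ((‖x‖ ^ 2 + ‖y‖ ^ 2) * diagCoeff t - 2 * inner ℝ x y * crossCoeff t) *
        exp (-‖x - y‖ ^ 2 / (4 * t)) := by
    rw [← exp_add, norm_sub_sq_real, diagCoeff, crossCoeff]
    congr 1
    ring
  rw [mehler, hexp, ← mul_div_assoc, div_rpow (by positivity) ha.le, neg_div, rpow_neg ha.le]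
  field_simp

end Mehler

/-- $\lim_{t→0^+} M_t(x,y)/H_t(|x-y|) = (2π)^{N/2} e^{|x|^2/4} e^{|y|^2/4}$,
where $H_t(r)=e^{-r^2/(4t)}/(4πt)^{N/2}$ is the Gauss–Weierstrass kernel. -/
theorem stmt_7 (N : ℕ) (x y : EuclideanSpace ℝ (Fin N)) :
    Filter.Tendsto
      (fun t : ℝ => mehler N t x y /
        (Real.exp (-‖x - y‖ ^ 2 / (4 * t)) / (4 * π * t) ^ ((N : ℝ) / 2)))
      (nhdsWithin 0 (Set.Ioi 0))
      (nhds ((2 * π) ^ ((N : ℝ) / 2) * Real.exp (‖x‖ ^ 2 / 4) * Real.exp (‖y‖ ^ 2 / 4))) := by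
  have hfactor : Tendsto (fun t => 4 * π * (t / (1 - exp (-2 * t)))) (𝓝[>] 0) (𝓝 (2 * π)) :=
    ((tendsto_div_one_sub_exp_neg_two_mul.const_mul (4 * π)).mono_left
      (nhdsGT_le_nhdsNE 0)).trans (le_of_eq (by ring_nf))
  have hexp := (continuous_exp.tendsto _).comp
    (((Mehler.tendsto_diagCoeff.const_mul (‖x‖ ^ 2 + ‖y‖ ^ 2)).sub
      (Mehler.tendsto_crossCoeff.const_mul (2 * inner ℝ x y))).mono_left (nhdsGT_le_nhdsNE 0))
  have hlim := (hfactor.rpow_const (p := (N : ℝ) / 2) (.inl (by positivity))).mul hexp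
  rw [mul_assoc, ← exp_add]
  convert hlim.congr' ?_ using 4
  · ring
  · filter_upwards [self_mem_nhdsWithin] with t ht
    exact (Mehler.mehler_div_gaussWeierstrass ht x y).symm
end

section
/- Let A, B ⊆ ℝ^N be disjoint measurable sets with γ(A) > 0 and γ(B) > 0. Then there exists a constant C = C(A,B) > 0 such that s·L^γ_s(A,B) ≥ C for every s ∈ (0,1). In particular, if A, B ⊆ B_R(0) for some R > 0, one may take C = 2 exp(-2R²/(e²-1)) γ(A) γ(B). -/
open MeasureTheory Real Set Filter

/-!
For `‖x‖, ‖y‖ ≤ R` the Mehler kernel is bounded below by `exp (-R² / (eᵗ - 1))`, since the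
quadratic form in its exponent is at most `2R² e⁻ᵗ (1 + e⁻ᵗ)`. Integrating this bound against
`t ^ (-s/2 - 1)` over `(1, 2]` and `(2, ∞)`, whose weights `s ∫ t ^ (-s/2 - 1)` are
`2 (1 - 2 ^ (-s/2))` and `2 · 2 ^ (-s/2)`, gives a lower bound for `s K_s(x, y)` which, by
Bernoulli's inequality, dominates `2 exp (-2R² / (e² - 1))` as long as `s ≤ 1`.
Integrating over `A × B` gives the bound on balls; in general, `A` and `B` meet a common ball in
sets of positive measure.
-/

lemma le_one_sub_mul_rpow_add {x p θ : ℝ} (hx0 : 0 ≤ x) (hx1 : x ≤ 1) (hp : 1 ≤ p)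
    (hθ : θ ≤ 1) (hθp : (1 - θ) * p ≤ 1) : x ≤ (1 - θ) * x ^ p + θ := by
  have hBernoulli : 1 + p * (x - 1) ≤ x ^ p := by
    simpa using one_add_mul_self_le_rpow_one_add (by linarith : (-1 : ℝ) ≤ x - 1) hp
  nlinarith [mul_le_mul_of_nonneg_left hBernoulli (sub_nonneg.mpr hθ),
    mul_nonneg (sub_nonneg.mpr hθp) (sub_nonneg.mpr hx1)]

lemma exp_neg_two_mul_div_le {a θ : ℝ} (ha : 0 ≤ a) (hθ : 0.7 ≤ θ) (hθ1 : θ ≤ 1) :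
    exp (-2 * a / (exp 2 - 1)) ≤
      (1 - θ) * exp (-a / (exp 1 - 1)) + θ * exp (-a / (exp 2 - 1)) := by
  set e := exp 1 with he
  have he2 : exp 2 = e * e := by rw [he, ← exp_add]; norm_num
  have he_lt : e < 2.7182818286 := exp_one_lt_d9
  have he_gt : 2.7182818283 < e := exp_one_gt_d9
  set x := exp (-a / (exp 2 - 1)) with hx
  have hx0 : 0 ≤ x := (exp_pos _).le
  have hx1 : x ≤ 1 := exp_le_one_iff.mpr <| div_nonpos_of_nonpos_of_nonneg (by linarith)
    (by nlinarith)
  have hexp1 : exp (-a / (e - 1)) = x ^ e * x := by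
    rw [hx, ← exp_mul, ← exp_add, he2]
    have h1 : e - 1 ≠ 0 := by linarith
    have h2 : e ^ 2 - 1 ≠ 0 := by nlinarith
    congr 1
    field_simp
    ring
  have hexp2 : exp (-2 * a / (exp 2 - 1)) = x * x := by
    rw [hx, ← exp_add]; ring_nf
  rw [hexp1, hexp2]
  calc x * x ≤ x * ((1 - θ) * x ^ e + θ) :=
        mul_le_mul_of_nonneg_left (le_one_sub_mul_rpow_add hx0 hx1 (by linarith) hθ1
          (by nlinarith)) hx0
    _ = (1 - θ) * (x ^ e * x) + θ * x := by ring

lemma seven_tenths_le_two_rpow_neg_half {s : ℝ} (hs : s ≤ 1) : 0.7 ≤ (2 : ℝ) ^ (-s / 2) := by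
  have hsq : (2 : ℝ) ^ (-s / 2) * 2 ^ (-s / 2) = 2 ^ (-s) := by
    rw [← rpow_add two_pos]; ring_nf
  have hhalf : (2 : ℝ) ^ (-1 : ℝ) ≤ 2 ^ (-s) :=
    rpow_le_rpow_of_exponent_le one_le_two (by linarith)
  have hpos : 0 < (2 : ℝ) ^ (-s / 2) := rpow_pos_of_pos two_pos _
  rw [rpow_neg_one] at hhalf
  nlinarith

lemma exp_neg_sq_div_le_mehler (N : ℕ) {T t R : ℝ} (hT : 0 < T) (hTt : T ≤ t)
    {x y : EuclideanSpace ℝ (Fin N)} (hx : ‖x‖ ≤ R) (hy : ‖y‖ ≤ R) :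
    exp (-R ^ 2 / (exp T - 1)) ≤ mehler N t x y := by
  set u := exp (-t) with hu
  have hu0 : 0 < u := exp_pos _
  have hu1 : u < 1 := exp_lt_one_iff.mpr (by linarith)
  have hu2 : exp (-2 * t) = u ^ 2 := by rw [hu, ← exp_nat_mul]; ring_nf
  have hd : 0 < 1 - u ^ 2 := by nlinarith
  have hinner : -R ^ 2 ≤ inner ℝ x y := by
    nlinarith [neg_abs_le (inner ℝ x y), abs_real_inner_le_norm x y,
      mul_le_mul hx hy (norm_nonneg y) ((norm_nonneg x).trans hx)]
  have hquad : u ^ 2 * ‖x‖ ^ 2 - 2 * u * inner ℝ x y + u ^ 2 * ‖y‖ ^ 2 ≤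
      2 * R ^ 2 * u * (1 + u) := by
    nlinarith [pow_le_pow_left₀ (norm_nonneg x) hx 2, pow_le_pow_left₀ (norm_nonneg y) hy 2]
  have hbound : 2 * R ^ 2 * u * (1 + u) / (2 * (1 - u ^ 2)) = R ^ 2 / (exp t - 1) := by
    have het : exp t = u⁻¹ := by rw [hu, exp_neg, inv_inv]
    have h1 : 1 - u ≠ 0 := by linarith
    have h2 : 1 + u ≠ 0 := by linarith
    rw [het]
    field_simp
    ring
  have hprefactor : 1 ≤ (1 - u ^ 2) ^ (-(N : ℝ) / 2) :=
    one_le_rpow_of_pos_of_le_one_of_nonpos hd (by nlinarith)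
      (div_nonpos_of_nonpos_of_nonneg (neg_nonpos.mpr N.cast_nonneg) zero_le_two)
  calc exp (-R ^ 2 / (exp T - 1))
      ≤ exp (-R ^ 2 / (exp t - 1)) := by
        rw [neg_div, neg_div]
        gcongr
        exact sub_pos.mpr (one_lt_exp_iff.mpr hT)
    _ ≤ exp (-(u ^ 2 * ‖x‖ ^ 2 - 2 * u * inner ℝ x y + u ^ 2 * ‖y‖ ^ 2) / (2 * (1 - u ^ 2))) := by
        rw [neg_div, neg_div, ← hbound]
        gcongr
    _ ≤ mehler N t x y := by
        rw [mehler, hu2]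
        exact le_mul_of_one_le_left (exp_pos _).le hprefactor

lemma lintegral_Ioi_rpow_neg_div_two_sub_one {σ a : ℝ} (hσ : 0 < σ) (ha : 0 < a) :
    ∫⁻ t in Ioi a, ENNReal.ofReal (t ^ (-σ / 2 - 1)) = ENNReal.ofReal (2 / σ * a ^ (-σ / 2)) := by
  have hexp : -σ / 2 - 1 < -1 := by linarith
  rw [← ofReal_integral_eq_lintegral_ofReal (integrableOn_Ioi_rpow_of_lt hexp ha)
    ((ae_restrict_iff' measurableSet_Ioi).mpr
      (ae_of_all _ fun t ht ↦ rpow_nonneg (ha.trans ht).le _)),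
    integral_Ioi_rpow_of_lt hexp ha, sub_add_cancel]
  congr 1
  field_simp

lemma lintegral_Ioc_rpow_neg_div_two_sub_one {σ a b : ℝ} (hσ : 0 < σ) (ha : 0 < a)
    (hab : a ≤ b) :
    ∫⁻ t in Ioc a b, ENNReal.ofReal (t ^ (-σ / 2 - 1)) =
      ENNReal.ofReal (2 / σ * (a ^ (-σ / 2) - b ^ (-σ / 2))) := by
  have hsplit := lintegral_union (μ := volume) (f := fun t ↦ ENNReal.ofReal (t ^ (-σ / 2 - 1)))
    measurableSet_Ioi (Ioc_disjoint_Ioi_same (a := a) (b := b))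
  rw [Ioc_union_Ioi_eq_Ioi hab, lintegral_Ioi_rpow_neg_div_two_sub_one hσ ha,
    lintegral_Ioi_rpow_neg_div_two_sub_one hσ (ha.trans_le hab)] at hsplit
  rw [ENNReal.eq_sub_of_add_eq ENNReal.ofReal_ne_top hsplit.symm,
    ← ENNReal.ofReal_sub _ (by have := rpow_nonneg (ha.le.trans hab) (-σ / 2); positivity),
    mul_sub]

lemma ofReal_mul_setLIntegral_le {α : Type*} [MeasurableSpace α] {μ : Measure α} {S : Set α}
    (hS : MeasurableSet S) {c : ℝ} (hc : 0 ≤ c) {f w : α → ℝ} (hf : ∀ t ∈ S, c ≤ f t)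
    (hw : ∀ t ∈ S, 0 ≤ w t) :
    ENNReal.ofReal c * ∫⁻ t in S, ENNReal.ofReal (w t) ∂μ ≤
      ∫⁻ t in S, ENNReal.ofReal (f t * w t) ∂μ := by
  rw [← lintegral_const_mul' _ _ ENNReal.ofReal_ne_top]
  refine setLIntegral_mono' hS fun t ht ↦ ?_
  rw [← ENNReal.ofReal_mul hc]
  exact ENNReal.ofReal_le_ofReal (mul_le_mul_of_nonneg_right (hf t ht) (hw t ht))

section Kernel

variable {N : ℕ} {x y : EuclideanSpace ℝ (Fin N)}

lemma ofReal_le_ofReal_mul_Kker {s c₁ c₂ : ℝ} (hs : 0 < s) (hc₁ : 0 ≤ c₁) (hc₂ : 0 ≤ c₂)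
    (h₁ : ∀ t ∈ Ioc (1 : ℝ) 2, c₁ ≤ mehler N t x y)
    (h₂ : ∀ t ∈ Ioi (2 : ℝ), c₂ ≤ mehler N t x y) :
    ENNReal.ofReal (2 * ((1 - 2 ^ (-s / 2)) * c₁ + 2 ^ (-s / 2) * c₂)) ≤
      ENNReal.ofReal s * Kker N s x y := by
  have hθ : (2 : ℝ) ^ (-s / 2) ≤ 1 := rpow_le_one_of_one_le_of_nonpos one_le_two (by linarith)
  have hw : ∀ t ∈ Ioi (1 : ℝ), 0 ≤ t ^ (-s / 2 - 1) := fun t ht ↦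
    rpow_nonneg (zero_le_one.trans ht.le) _
  calc ENNReal.ofReal (2 * ((1 - 2 ^ (-s / 2)) * c₁ + 2 ^ (-s / 2) * c₂))
      = ENNReal.ofReal s * (ENNReal.ofReal c₁ * ENNReal.ofReal (2 / s * (1 - 2 ^ (-s / 2))) +
          ENNReal.ofReal c₂ * ENNReal.ofReal (2 / s * 2 ^ (-s / 2))) := by
        rw [← ENNReal.ofReal_mul hc₁, ← ENNReal.ofReal_mul hc₂,
          ← ENNReal.ofReal_add (mul_nonneg hc₁ (mul_nonneg (by positivity) (sub_nonneg.mpr hθ)))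
            (by positivity),
          ← ENNReal.ofReal_mul hs.le]
        congr 1
        field_simp
    _ = ENNReal.ofReal s *
        (ENNReal.ofReal c₁ * (∫⁻ t in Ioc 1 2, ENNReal.ofReal (t ^ (-s / 2 - 1))) +
          ENNReal.ofReal c₂ * ∫⁻ t in Ioi 2, ENNReal.ofReal (t ^ (-s / 2 - 1))) := by
        rw [lintegral_Ioc_rpow_neg_div_two_sub_one hs one_pos one_le_two,
          lintegral_Ioi_rpow_neg_div_two_sub_one hs two_pos, one_rpow]
    _ ≤ ENNReal.ofReal s *
        ((∫⁻ t in Ioc 1 2, ENNReal.ofReal (mehler N t x y * t ^ (-s / 2 - 1))) +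
          ∫⁻ t in Ioi 2, ENNReal.ofReal (mehler N t x y * t ^ (-s / 2 - 1))) := by
        gcongr
        · exact ofReal_mul_setLIntegral_le measurableSet_Ioc hc₁ h₁ fun t ht ↦ hw t ht.1
        · exact ofReal_mul_setLIntegral_le measurableSet_Ioi hc₂ h₂ fun t ht ↦
            hw t (one_lt_two.trans (mem_Ioi.mp ht))
    _ = ENNReal.ofReal s *
        ∫⁻ t in Ioi 1, ENNReal.ofReal (mehler N t x y * t ^ (-s / 2 - 1)) := by
        rw [← lintegral_union measurableSet_Ioi Ioc_disjoint_Ioi_same,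
          Ioc_union_Ioi_eq_Ioi one_le_two]
    _ ≤ ENNReal.ofReal s * Kker N s x y := by
        gcongr
        exact lintegral_mono_set (Ioi_subset_Ioi zero_le_one)

lemma two_mul_ofReal_le_ofReal_mul_Kker {s R : ℝ} (hs0 : 0 < s) (hs1 : s ≤ 1)
    (hx : ‖x‖ ≤ R) (hy : ‖y‖ ≤ R) :
    2 * ENNReal.ofReal (exp (-2 * R ^ 2 / (exp 2 - 1))) ≤ ENNReal.ofReal s * Kker N s x y := by
  have hθ := exp_neg_two_mul_div_le (sq_nonneg R) (seven_tenths_le_two_rpow_neg_half hs1)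
    (rpow_le_one_of_one_le_of_nonpos one_le_two (by linarith))
  rw [← ENNReal.ofReal_ofNat 2, ← ENNReal.ofReal_mul zero_le_two]
  refine le_trans (ENNReal.ofReal_le_ofReal (by linarith))
    (ofReal_le_ofReal_mul_Kker hs0 (exp_pos _).le (exp_pos _).le
      (fun t ht ↦ exp_neg_sq_div_le_mehler N one_pos ht.1.le hx hy)
      (fun t ht ↦ exp_neg_sq_div_le_mehler N two_pos (le_of_lt ht) hx hy))

end Kernel

section Interaction

variable {N : ℕ} {s : ℝ} {A B : Set (EuclideanSpace ℝ (Fin N))}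

lemma Lgamma_mono {A' B' : Set (EuclideanSpace ℝ (Fin N))} (hA : A ⊆ A') (hB : B ⊆ B') :
    Lgamma N s A B ≤ Lgamma N s A' B' :=
  (lintegral_mono fun _ ↦ lintegral_mono_set hB).trans (lintegral_mono_set hA)

lemma mul_measure_mul_le_mul_Lgamma (hA : MeasurableSet A) (hB : MeasurableSet B)
    {c k : ENNReal} (hk : k ≠ ⊤) (hcK : ∀ x ∈ A, ∀ y ∈ B, c ≤ k * Kker N s x y) :
    c * gaussMeasure N A * gaussMeasure N B ≤ k * Lgamma N s A B := by
  calc c * gaussMeasure N A * gaussMeasure N B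
      = ∫⁻ _ in A, ∫⁻ _ in B, c ∂gaussMeasure N ∂gaussMeasure N := by
        simp only [setLIntegral_const]
        ring
    _ ≤ ∫⁻ x in A, ∫⁻ y in B, k * Kker N s x y ∂gaussMeasure N ∂gaussMeasure N :=
        setLIntegral_mono' hA fun x hx ↦ setLIntegral_mono' hB (hcK x hx)
    _ = k * Lgamma N s A B := by
        simp only [lintegral_const_mul' _ _ hk, Lgamma]

lemma le_ofReal_mul_Lgamma_of_subset_ball (hA : MeasurableSet A) (hB : MeasurableSet B)
    {R : ℝ} (hAR : A ⊆ Metric.ball 0 R) (hBR : B ⊆ Metric.ball 0 R) (hs0 : 0 < s)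
    (hs1 : s ≤ 1) :
    2 * ENNReal.ofReal (exp (-2 * R ^ 2 / (exp 2 - 1))) * gaussMeasure N A * gaussMeasure N B ≤
      ENNReal.ofReal s * Lgamma N s A B :=
  mul_measure_mul_le_mul_Lgamma hA hB ENNReal.ofReal_ne_top fun _ hx _ hy ↦
    two_mul_ofReal_le_ofReal_mul_Kker hs0 hs1 (mem_ball_zero_iff.mp (hAR hx)).le
      (mem_ball_zero_iff.mp (hBR hy)).le

end Interaction

lemma exists_measure_inter_ball_pos {E : Type*} [PseudoMetricSpace E] [MeasurableSpace E]
    {μ : Measure E} {A : Set E} (x₀ : E) (hA : 0 < μ A) :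
    ∀ᶠ n : ℕ in atTop, 0 < μ (A ∩ Metric.ball x₀ n) := by
  have hmono : Monotone fun n : ℕ ↦ A ∩ Metric.ball x₀ n := fun m n hmn ↦
    inter_subset_inter_right _ (Metric.ball_subset_ball (Nat.cast_le.mpr hmn))
  have hlim := tendsto_measure_iUnion_atTop (μ := μ) hmono
  rw [← inter_iUnion, Metric.iUnion_ball_nat, inter_univ] at hlim
  exact hlim.eventually_const_lt hA

theorem stmt_9_general (N : ℕ) (A B : Set (EuclideanSpace ℝ (Fin N)))
    (hA : MeasurableSet A) (hB : MeasurableSet B)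
    (hA0 : 0 < gaussMeasure N A) (hB0 : 0 < gaussMeasure N B) :
    (∃ C : ℝ, 0 < C ∧ ∀ s ∈ Set.Ioo (0 : ℝ) 1,
      ENNReal.ofReal C ≤ ENNReal.ofReal s * Lgamma N s A B) ∧
    (∀ R : ℝ, 0 < R → A ⊆ Metric.ball 0 R → B ⊆ Metric.ball 0 R →
      ∀ s ∈ Set.Ioo (0 : ℝ) 1,
        2 * ENNReal.ofReal (Real.exp (-2 * R ^ 2 / (Real.exp 2 - 1))) *
            gaussMeasure N A * gaussMeasure N B
          ≤ ENNReal.ofReal s * Lgamma N s A B) := by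
  refine ⟨?_, fun R _ hAR hBR s hs ↦
    le_ofReal_mul_Lgamma_of_subset_ball hA hB hAR hBR hs.1 hs.2.le⟩
  obtain ⟨n, hAn, hBn⟩ :=
    ((exists_measure_inter_ball_pos 0 hA0).and (exists_measure_inter_ball_pos 0 hB0)).exists
  have hpos : 0 < 2 * ENNReal.ofReal (exp (-2 * (n : ℝ) ^ 2 / (exp 2 - 1))) *
      gaussMeasure N (A ∩ Metric.ball 0 n) * gaussMeasure N (B ∩ Metric.ball 0 n) :=
    ENNReal.mul_pos (ENNReal.mul_pos (ENNReal.mul_pos two_ne_zero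
      (ENNReal.ofReal_pos.mpr (exp_pos _)).ne').ne' hAn.ne').ne' hBn.ne'
  obtain ⟨C, -, hC0, hC⟩ := ENNReal.lt_iff_exists_real_btwn.mp hpos
  refine ⟨C, ENNReal.ofReal_pos.mp hC0, fun s hs ↦ hC.le.trans ?_⟩
  calc _ ≤ ENNReal.ofReal s * Lgamma N s (A ∩ Metric.ball 0 n) (B ∩ Metric.ball 0 n) :=
        le_ofReal_mul_Lgamma_of_subset_ball (hA.inter measurableSet_ball)
          (hB.inter measurableSet_ball) inter_subset_right inter_subset_right hs.1 hs.2.le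
    _ ≤ ENNReal.ofReal s * Lgamma N s A B := by
        gcongr
        exact Lgamma_mono inter_subset_left inter_subset_left

/-- positivity of the interaction: for disjoint sets of positive Gaussian
measure there is $C>0$ with $s L^γ_s(A,B) ≥ C$ for all $s∈(0,1)$; if moreover
$A,B⊂ B_R(0)$ one can take $C = 2\exp(-2R^2/(e^2-1))γ(A)γ(B)$. -/
theorem stmt_9 (N : ℕ) (A B : Set (EuclideanSpace ℝ (Fin N)))
    (hA : MeasurableSet A) (hB : MeasurableSet B) (hAB : Disjoint A B)
    (hA0 : 0 < gaussMeasure N A) (hB0 : 0 < gaussMeasure N B) :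
    (∃ C : ℝ, 0 < C ∧ ∀ s ∈ Set.Ioo (0 : ℝ) 1,
      ENNReal.ofReal C ≤ ENNReal.ofReal s * Lgamma N s A B) ∧
    (∀ R : ℝ, 0 < R → A ⊆ Metric.ball 0 R → B ⊆ Metric.ball 0 R →
      ∀ s ∈ Set.Ioo (0 : ℝ) 1,
        2 * ENNReal.ofReal (Real.exp (-2 * R ^ 2 / (Real.exp 2 - 1))) *
            gaussMeasure N A * gaussMeasure N B
          ≤ ENNReal.ofReal s * Lgamma N s A B) :=
  stmt_9_general N A B hA hB hA0 hB0
end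

section
/- Let Ω ⊆ ℝ^N be a measurable set, and for a measurable set E ⊆ ℝ^N define μ(E) := 2(γ(E)γ(Ω\E) + γ(E∩Ω)γ(Eᶜ∩Ωᶜ)). Then μ is subadditive: for all measurable sets E, F ⊆ ℝ^N, μ(E∪F) ≤ μ(E) + μ(F). -/
open MeasureTheory Real Set Filter

/-- The limit set function $μ(E) = 2(γ(E)γ(Ω\setminus E)+γ(E∩Ω)γ(E^c∩Ω^c))$. -/
noncomputable def muSet (N : ℕ) (Ω E : Set (EuclideanSpace ℝ (Fin N))) : ENNReal :=
  2 * (gaussMeasure N E * gaussMeasure N (Ω \ E) +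
    gaussMeasure N (E ∩ Ω) * gaussMeasure N (Eᶜ ∩ Ωᶜ))

theorem mul_apply_union_le {α : Type*} {f g : Set α → ENNReal}
    (hf : ∀ s t, f (s ∪ t) ≤ f s + f t) (hg : Antitone g) (s t : Set α) :
    f (s ∪ t) * g (s ∪ t) ≤ f s * g s + f t * g t :=
  calc f (s ∪ t) * g (s ∪ t) ≤ (f s + f t) * g (s ∪ t) := by gcongr; exact hf s t
    _ = f s * g (s ∪ t) + f t * g (s ∪ t) := add_mul _ _ _
    _ ≤ f s * g s + f t * g t := by
      gcongr <;> apply hg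
      exacts [subset_union_left, subset_union_right]

theorem stmt_10_general (N : ℕ) (Ω : Set (EuclideanSpace ℝ (Fin N)))
    (E F : Set (EuclideanSpace ℝ (Fin N))) :
    muSet N Ω (E ∪ F) ≤ muSet N Ω E + muSet N Ω F := by
  set γ := gaussMeasure N
  have hΩdiff : γ (E ∪ F) * γ (Ω \ (E ∪ F)) ≤ γ E * γ (Ω \ E) + γ F * γ (Ω \ F) :=
    mul_apply_union_le (f := γ) (g := fun X => γ (Ω \ X)) measure_union_le
      (fun _ _ h => measure_mono (sdiff_subset_sdiff_right h)) E F
  have hΩcompl : γ ((E ∪ F) ∩ Ω) * γ ((E ∪ F)ᶜ ∩ Ωᶜ) ≤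
      γ (E ∩ Ω) * γ (Eᶜ ∩ Ωᶜ) + γ (F ∩ Ω) * γ (Fᶜ ∩ Ωᶜ) :=
    mul_apply_union_le (f := fun X => γ (X ∩ Ω)) (g := fun X => γ (Xᶜ ∩ Ωᶜ))
      (fun X Y => union_inter_distrib_right X Y Ω ▸ measure_union_le _ _)
      (fun _ _ h => measure_mono (inter_subset_inter_left _ (compl_subset_compl.2 h))) E F
  calc muSet N Ω (E ∪ F)
        ≤ 2 * ((γ E * γ (Ω \ E) + γ F * γ (Ω \ F)) +
          (γ (E ∩ Ω) * γ (Eᶜ ∩ Ωᶜ) + γ (F ∩ Ω) * γ (Fᶜ ∩ Ωᶜ))) :=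
          mul_le_mul_right (add_le_add hΩdiff hΩcompl) 2
    _ = muSet N Ω E + muSet N Ω F := by unfold muSet; ring

/-- $μ$ is subadditive: $μ(E∪F) ≤ μ(E)+μ(F)$. -/
theorem stmt_10 (N : ℕ) (Ω : Set (EuclideanSpace ℝ (Fin N))) (hΩ : MeasurableSet Ω)
    (E F : Set (EuclideanSpace ℝ (Fin N))) (hE : MeasurableSet E) (hF : MeasurableSet F) :
    muSet N Ω (E ∪ F) ≤ muSet N Ω E + muSet N Ω F :=
  stmt_10_general N Ω E F
end

section
/- Let Ω ⊆ ℝ^N be a nonempty open set, and for a measurable set E ⊆ ℝ^N define μ(E) := 2(γ(E)γ(Ω\E) + γ(E∩Ω)γ(Eᶜ∩Ωᶜ)). Then μ is not monotone with respect to inclusions: there exist measurable sets E ⊆ F with μ(E) > μ(F). -/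
open MeasureTheory Real Set Filter

/-!
`μ(ℝᴺ) = 0`, since each of its two products has a factor `γ(∅)`. On the other hand
`μ(E) ≥ 2 γ(E) γ(Ω \ E)`, and the Gaussian density is positive everywhere, so `γ` charges
every nonempty open set; splitting `Ω` (which has at least two points as `N > 0`) into two
disjoint nonempty open pieces `U, V` gives `μ(U) > 0 = μ(ℝᴺ)`.
-/

lemma gaussDensity_pos (N : ℕ) (x : EuclideanSpace ℝ (Fin N)) : 0 < gaussDensity N x := by
  unfold gaussDensity; positivity

instance gaussMeasure.isOpenPosMeasure (N : ℕ) : (gaussMeasure N).IsOpenPosMeasure :=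
  (withDensity_absolutelyContinuous' (by unfold gaussDensity; fun_prop)
    (ae_of_all _ fun x => (ENNReal.ofReal_pos.2 (gaussDensity_pos N x)).ne')).isOpenPosMeasure

theorem IsOpen.exists_disjoint_nonempty_open_subsets {X : Type*} [TopologicalSpace X]
    [T2Space X] [PerfectSpace X] {Ω : Set X} (hΩ : IsOpen Ω) (hne : Ω.Nonempty) :
    ∃ U V : Set X, IsOpen U ∧ IsOpen V ∧ U.Nonempty ∧ V.Nonempty ∧ U ⊆ Ω ∧ V ⊆ Ω ∧
      Disjoint U V := by
  obtain ⟨x, hx⟩ := hne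
  obtain ⟨y, hyΩ, hyx⟩ : ∃ y ∈ Ω, y ≠ x := by
    simpa [and_comm] using (preperfect_iff_nhds.1 hΩ.preperfect x hx Ω (hΩ.mem_nhds hx))
  obtain ⟨u, v, hu, hv, hxu, hyv, huv⟩ := t2_separation hyx.symm
  exact ⟨Ω ∩ u, Ω ∩ v, hΩ.inter hu, hΩ.inter hv, ⟨x, hx, hxu⟩, ⟨y, hyΩ, hyv⟩,
    inter_subset_left, inter_subset_left,
    huv.mono inter_subset_right inter_subset_right⟩

lemma muSet_univ (N : ℕ) (Ω : Set (EuclideanSpace ℝ (Fin N))) : muSet N Ω univ = 0 := by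
  simp [muSet]

lemma muSet_pos {N : ℕ} {Ω E : Set (EuclideanSpace ℝ (Fin N))} (hE : gaussMeasure N E ≠ 0)
    (hΩE : gaussMeasure N (Ω \ E) ≠ 0) : 0 < muSet N Ω E := by
  simp [muSet, pos_iff_ne_zero, hE, hΩE]

/-- $μ$ is not monotone with respect to inclusions: there are measurable
sets $E ⊆ F$ with $μ(E) > μ(F)$. -/
theorem stmt_11 (N : ℕ) (hN : 0 < N) (Ω : Set (EuclideanSpace ℝ (Fin N)))
    (hΩopen : IsOpen Ω) (hΩne : Ω.Nonempty) :
    ∃ E F : Set (EuclideanSpace ℝ (Fin N)),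
      MeasurableSet E ∧ MeasurableSet F ∧ E ⊆ F ∧ muSet N Ω F < muSet N Ω E := by
  have : Nonempty (Fin N) := ⟨⟨0, hN⟩⟩
  have : PerfectSpace (EuclideanSpace ℝ (Fin N)) := perfectSpace_of_module ℝ _
  obtain ⟨U, V, hU, hV, hUne, hVne, -, hVΩ, hUV⟩ :=
    hΩopen.exists_disjoint_nonempty_open_subsets hΩne
  refine ⟨U, univ, hU.measurableSet, .univ, subset_univ U, ?_⟩
  rw [muSet_univ]
  exact muSet_pos (hU.measure_ne_zero _ hUne) fun hnull =>
    hV.measure_ne_zero _ hVne (measure_mono_null (subset_sdiff.2 ⟨hVΩ, hUV.symm⟩) hnull)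
end

section
/- Let s ∈ (0,1) and let a < b ≤ c < d be real numbers. Then ∫_a^b ∫_c^d |x-y|^{-(1+s)} dy dx = (1/(s(1-s))) [(c-a)^{1-s} + (d-b)^{1-s} − (c-b)^{1-s} − (d-a)^{1-s}]. -/
open intervalIntegral

lemma inner17 (s x c d : ℝ) (hs : s ∈ Set.Ioo (0 : ℝ) 1) (hxc : x < c) (hcd : c < d) :
    ∫ y in c..d, |x - y| ^ (-(1 + s)) =
      ((c - x) ^ (-s) - (d - x) ^ (-s)) / s := by
  have h1 : (∫ y in c..d, |x - y| ^ (-(1 + s))) = ∫ y in c..d, (y - x) ^ (-(1 + s)) := by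
    apply intervalIntegral.integral_congr
    intro y hy
    rw [Set.uIcc_of_le hcd.le] at hy
    dsimp only
    rw [abs_sub_comm, abs_of_pos (by linarith [hy.1])]
  have hmem : (0 : ℝ) ∉ Set.uIcc (c - x) (d - x) := by
    rw [Set.uIcc_of_le (by linarith : c - x ≤ d - x)]
    exact fun h => absurd h.1 (by push_neg; linarith)
  rw [h1, intervalIntegral.integral_comp_sub_right (fun y => y ^ (-(1 + s))) x,
    integral_rpow (Or.inr ⟨by intro h; have hs0 : (0:ℝ) < s := hs.1; linarith, hmem⟩)]
  rw [show -(1 + s) + 1 = -s from by ring, div_neg, ← neg_div, neg_sub]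

/-- for $s∈(0,1)$ and $a<b≤c<d$,
$∫_a^b ∫_c^d |x-y|^{-(1+s)} dy\,dx
  = \frac{1}{s(1-s)}[(c-a)^{1-s}+(d-b)^{1-s}-(c-b)^{1-s}-(d-a)^{1-s}]$. -/
theorem stmt_17 (s a b c d : ℝ) (hs : s ∈ Set.Ioo (0 : ℝ) 1)
    (hab : a < b) (hbc : b ≤ c) (hcd : c < d) :
    ∫ x in a..b, ∫ y in c..d, |x - y| ^ (-(1 + s)) =
      (1 / (s * (1 - s))) *
        ((c - a) ^ (1 - s) + (d - b) ^ (1 - s) - (c - b) ^ (1 - s) - (d - a) ^ (1 - s)) := by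
  obtain ⟨hs0, hs1⟩ := hs
  have hnb : ∀ᵐ (x : ℝ) ∂MeasureTheory.volume, x ≠ b := by
    refine MeasureTheory.ae_iff.mpr ?_
    simp
  have hstep : (∫ x in a..b, ∫ y in c..d, |x - y| ^ (-(1 + s))) =
      ∫ x in a..b, ((c - x) ^ (-s) - (d - x) ^ (-s)) / s := by
    apply intervalIntegral.integral_congr_ae
    filter_upwards [hnb] with x hxb hx
    rw [Set.uIoc_of_le hab.le] at hx
    exact inner17 s x c d ⟨hs0, hs1⟩ (lt_of_lt_of_le (lt_of_le_of_ne hx.2 hxb) hbc) hcd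
  rw [hstep]
  have hic : IntervalIntegrable (fun x => (c - x) ^ (-s)) MeasureTheory.volume a b := by
    have := ((intervalIntegrable_rpow' (a := c - b) (b := c - a) (r := -s)
      (by linarith)).comp_sub_left c).symm
    simpa using this
  have hid : IntervalIntegrable (fun x => (d - x) ^ (-s)) MeasureTheory.volume a b := by
    have := ((intervalIntegrable_rpow' (a := d - b) (b := d - a) (r := -s)
      (by linarith)).comp_sub_left d).symm
    simpa using this
  have hc : (∫ x in a..b, (c - x) ^ (-s)) =
      ((c - a) ^ (1 - s) - (c - b) ^ (1 - s)) / (1 - s) := by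
    rw [intervalIntegral.integral_comp_sub_left (fun y => y ^ (-s)) c,
      integral_rpow (Or.inl (by linarith)), show -s + 1 = 1 - s from by ring]
  have hd : (∫ x in a..b, (d - x) ^ (-s)) =
      ((d - a) ^ (1 - s) - (d - b) ^ (1 - s)) / (1 - s) := by
    rw [intervalIntegral.integral_comp_sub_left (fun y => y ^ (-s)) d,
      integral_rpow (Or.inl (by linarith)), show -s + 1 = 1 - s from by ring]
  have hsplit : (∫ x in a..b, ((c - x) ^ (-s) - (d - x) ^ (-s)) / s) =
      (1 / s) * ((∫ x in a..b, (c - x) ^ (-s)) - ∫ x in a..b, (d - x) ^ (-s)) := by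
    rw [← intervalIntegral.integral_sub hic hid, ← intervalIntegral.integral_const_mul]
    congr 1; ext x; field_simp
  rw [hsplit, hc, hd]
  generalize (c - a) ^ (1 - s) = A
  generalize (c - b) ^ (1 - s) = B
  generalize (d - a) ^ (1 - s) = D
  generalize (d - b) ^ (1 - s) = E
  have h1 : s ≠ 0 := ne_of_gt hs0
  have h2 : (1 : ℝ) - s ≠ 0 := by linarith
  field_simp
  ring
end
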